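/- arXiv:1504.04685 — 6 statements merged into one kernel-verified Lean document; each statement's English description precedes it below -/
import Mathlib

section
/- Two elements (g_1,…,g_n,π) and (f_1,…,f_n,τ) of the wreath product G≀S_n are conjugate if and only if they have the same type, i.e., for every conjugacy class C of G, the multiset of lengths of cycles of π whose cycle product lies in C equals the multiset of lengths of cycles of τ whose cycle product lies in C. -/
/-- The action of `Equiv.Perm (Fin n)` on `Fin n → G` by permuting coordinates. -/
def wreathHom (G : Type*) [Group G] (n : ℕ) : Equiv.Perm (Fin n) →* MulAut (Fin n → G) where
  toFun π := MulEquiv.arrowCongr π (MulEquiv.refl G)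
  map_one' := by ext f i; rfl
  map_mul' := by intro π σ; ext f i; rfl

/-- The wreath product `G ≀ Sₙ`. -/
abbrev WreathProduct (G : Type*) [Group G] (n : ℕ) :=
  SemidirectProduct (Fin n → G) (Equiv.Perm (Fin n)) (wreathHom G n)

/-- The cycle product of `h = (g₁,…,gₙ,π) ∈ G≀Sₙ` along the cycle of `π` through `i`:
if the cycle through `i = i₁` is `(i₁,…,i_k)` (so `i_j = π^{j-1} i`), this is
`g_{i_k} g_{i_{k-1}} ⋯ g_{i₁}`. -/
noncomputable def cycleProd {G : Type*} [Group G] {n : ℕ} (h : WreathProduct G n) (i : Fin n) : G :=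
  (((List.range (Function.minimalPeriod (⇑h.right) i)).map
      fun j => h.left ((h.right ^ j) i)).reverse).prod

/- The type of an element `h ∈ G≀Sₙ`: to each conjugacy class `C` of `G` it assigns the
multiset of lengths of the cycles of the permutation part of `h` whose cycle product lies
in `C`.  (Each cycle is counted exactly once, via its minimal element.) -/
open Classical in
noncomputable def wrType {G : Type*} [Group G] {n : ℕ} (h : WreathProduct G n) :
    ConjClasses G → Multiset ℕ := fun C =>
  ((Finset.univ.filter fun i : Fin n =>
      (∀ k : ℕ, i ≤ (h.right ^ k) i) ∧ ConjClasses.mk (cycleProd h i) = C).val).map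
    fun i => Function.minimalPeriod (⇑h.right) i

/-!
Let `x = (f, π)` and let `k` be the length of the cycle of `π` through `i`. The cycle product
through `π i` is the `i`-th coordinate of `x ^ k`, and `π ^ k` fixes `i`. Hence conjugation by
`c = (u, σ)` conjugates in `G` the cycle product of `x` through `i` into that of `c x c⁻¹`
through `σ i`, while `σ` carries the cycles of `π` onto those of `σ π σ⁻¹` of the same lengths.
So conjugate elements admit a bijection between their cycle minima preserving the key (length of
the cycle, class of its cycle product); and equal types mean exactly that such a bijection
exists, since the type counts the cycle minima with each key.

Conversely, given such a bijection `e` from the cycle minima of `x = (f, π)` to those of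
`y = (g, τ)`, let `w r` conjugate the cycle product of `x` at `r` into that of `y` at `e r`.
Put `σ (π ^ m r) = τ ^ m (e r)`, and give the conjugator there the `G`-coordinate
`(y ^ m)_{τ ^ m (e r)} * w r * ((x ^ m)_{π ^ m r})⁻¹`, as `c = y ^ m c x ^ (-m)` forces. Going
once around the cycle multiplies the outer factors by the two cycle products, which `w r`
intertwines, so this is well defined.
-/

namespace Equiv.Perm

open Function

variable {α β γ : Type*}

theorem pow_minimalPeriod_apply (π : Perm α) (a : α) :
    (π ^ minimalPeriod π a) a = a := by
  rw [← iterate_eq_pow, iterate_minimalPeriod]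

theorem periodic_pow_apply (π : Perm α) (a : α) :
    Periodic (fun m : ℕ => (π ^ m) a) (minimalPeriod π a) := fun m => by
  simp only [pow_add, mul_apply, pow_minimalPeriod_apply]

theorem minimalPeriod_conj_apply (σ π : Perm α) (a : α) :
    minimalPeriod (σ * π * σ⁻¹) (σ a) = minimalPeriod π a := by
  refine minimalPeriod_eq_minimalPeriod_iff.2 fun m => ?_
  rw [IsPeriodicPt, IsFixedPt, IsPeriodicPt, IsFixedPt, iterate_eq_pow, iterate_eq_pow, conj_pow]
  simp

variable [Finite α] {π : Perm α}

theorem minimalPeriod_apply_eq (π : Perm α) (a : α) :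
    minimalPeriod π (π a) = minimalPeriod π a :=
  minimalPeriod_apply (π.injective.mem_periodicPts a)

theorem SameCycle.apply_eq_of_invariant {φ : α → γ} (hφ : ∀ a, φ (π a) = φ a) {a b : α}
    (h : SameCycle π a b) : φ a = φ b := by
  obtain ⟨m, rfl⟩ := h.exists_nat_pow_eq
  clear h
  induction m with
  | zero => rfl
  | succ m ih => rw [ih, pow_succ', mul_apply, hφ]

variable [LinearOrder α]

def IsCycleMin (π : Perm α) (r : α) : Prop := ∀ k : ℕ, r ≤ (π ^ k) r

abbrev CycleMins (π : Perm α) : Type _ := {r // IsCycleMin π r}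

theorem IsCycleMin.eq_of_sameCycle {r r' : α} (hr : IsCycleMin π r) (hr' : IsCycleMin π r')
    (h : SameCycle π r r') : r = r' := by
  obtain ⟨a, ha⟩ := h.exists_nat_pow_eq
  obtain ⟨b, hb⟩ := h.symm.exists_nat_pow_eq
  exact le_antisymm (ha ▸ hr a) (hb ▸ hr' b)

theorem exists_isCycleMin_sameCycle (π : Perm α) (a : α) :
    ∃ r, IsCycleMin π r ∧ SameCycle π r a := by
  classical
  have := Fintype.ofFinite α
  obtain ⟨r, hr, hmin⟩ :=
    (Finset.univ.filter (SameCycle π a)).exists_min_image id ⟨a, by simp [SameCycle.rfl]⟩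
  simp only [Finset.mem_filter, Finset.mem_univ, true_and, id] at hr hmin
  exact ⟨r, fun k => hmin _ (hr.trans (sameCycle_pow_right.mpr .rfl)), hr.symm⟩

variable (π) in
noncomputable def cycleMin (a : α) : CycleMins π :=
  ⟨_, (exists_isCycleMin_sameCycle π a).choose_spec.1⟩

theorem sameCycle_cycleMin (a : α) : SameCycle π (cycleMin π a) a :=
  (exists_isCycleMin_sameCycle π a).choose_spec.2

theorem cycleMin_eq_of_sameCycle {a b : α} (h : SameCycle π a b) :
    cycleMin π a = cycleMin π b :=
  Subtype.ext <| (cycleMin π a).2.eq_of_sameCycle (cycleMin π b).2 <|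
    (sameCycle_cycleMin a).trans (h.trans (sameCycle_cycleMin b).symm)

theorem cycleMin_coe (r : CycleMins π) : cycleMin π r = r :=
  Subtype.ext <| (cycleMin π r).2.eq_of_sameCycle r.2 (sameCycle_cycleMin _)

theorem cycleMin_pow_apply (r : CycleMins π) (m : ℕ) : cycleMin π ((π ^ m) r) = r := by
  rw [← cycleMin_eq_of_sameCycle (sameCycle_pow_right.mpr .rfl), cycleMin_coe]

variable (π) in
noncomputable def cycleIndex (a : α) : ℕ :=
  (sameCycle_cycleMin (π := π) a).exists_nat_pow_eq.choose

theorem pow_cycleIndex_apply (π : Perm α) (a : α) : (π ^ cycleIndex π a) (cycleMin π a) = a :=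
  (sameCycle_cycleMin a).exists_nat_pow_eq.choose_spec

theorem exists_pow_apply_eq (π : Perm α) (a : α) :
    ∃ (r : CycleMins π) (m : ℕ), (π ^ m) r = a :=
  ⟨_, _, pow_cycleIndex_apply π a⟩

section Conj

variable {σ τ : Perm α}

noncomputable def cycleMinConjEquiv (hτ : τ = σ * π * σ⁻¹) :
    CycleMins π ≃ CycleMins τ where
  toFun r := cycleMin τ (σ r)
  invFun t := cycleMin π (σ.symm t)
  left_inv r := by
    subst hτ
    have h := sameCycle_cycleMin (π := σ * π * σ⁻¹) (σ r)
    rw [sameCycle_conj, coe_inv, symm_apply_apply] at h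
    dsimp only
    rw [cycleMin_eq_of_sameCycle h, cycleMin_coe]
  right_inv t := by
    subst hτ
    have h := (sameCycle_cycleMin (π := π) (σ.symm t)).conj (g := σ)
    rw [apply_symm_apply] at h
    dsimp only
    rw [cycleMin_eq_of_sameCycle h, cycleMin_coe]

theorem sameCycle_cycleMinConjEquiv (hτ : τ = σ * π * σ⁻¹) (r : CycleMins π) :
    SameCycle τ (cycleMinConjEquiv hτ r) (σ r) :=
  sameCycle_cycleMin _

end Conj

variable (π) in
noncomputable def cycleLift (F : CycleMins π → ℕ → β) (a : α) : β :=
  F (cycleMin π a) (cycleIndex π a)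

theorem cycleLift_pow_apply {F : CycleMins π → ℕ → β}
    (hF : ∀ r, Periodic (F r) (minimalPeriod π r)) (r : CycleMins π) (m : ℕ) :
    cycleLift π F ((π ^ m) r) = F r m := by
  have hidx := pow_cycleIndex_apply π ((π ^ m) r)
  rw [cycleMin_pow_apply] at hidx
  rw [cycleLift, cycleMin_pow_apply]
  generalize cycleIndex π ((π ^ m) r) = j at hidx ⊢
  rw [← iterate_eq_pow, ← iterate_eq_pow, ← iterate_mod_minimalPeriod_eq,
    ← iterate_mod_minimalPeriod_eq (n := m)] at hidx
  have hpos := minimalPeriod_pos_of_mem_periodicPts (π.injective.mem_periodicPts (r : α))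
  rw [← (hF r).map_mod_nat, ← (hF r).map_mod_nat m,
    iterate_injOn_Iio_minimalPeriod (Nat.mod_lt _ hpos) (Nat.mod_lt _ hpos) hidx]

variable [LinearOrder β] {τ : Perm β}

variable (π τ) in
noncomputable def cycleMap (e : CycleMins π → CycleMins τ) : α → β :=
  cycleLift π fun r m => (τ ^ m) (e r)

theorem cycleMap_pow_apply {e : CycleMins π → CycleMins τ}
    (he : ∀ r, minimalPeriod τ (e r) = minimalPeriod π r) (r : CycleMins π) (m : ℕ) :
    cycleMap π τ e ((π ^ m) r) = (τ ^ m) (e r) :=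
  cycleLift_pow_apply (fun r => he r ▸ periodic_pow_apply τ (e r)) r m

variable [Finite β]

noncomputable def cycleTransport (e : CycleMins π ≃ CycleMins τ)
    (he : ∀ r, minimalPeriod τ (e r) = minimalPeriod π r) : α ≃ β :=
  have he' t : minimalPeriod π (e.symm t) = minimalPeriod τ t := by
    rw [← he, e.apply_symm_apply]
  { toFun := cycleMap π τ e
    invFun := cycleMap τ π e.symm
    left_inv := fun a => by
      obtain ⟨r, m, rfl⟩ := exists_pow_apply_eq π a
      rw [cycleMap_pow_apply he, cycleMap_pow_apply he', e.symm_apply_apply]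
    right_inv := fun b => by
      obtain ⟨t, m, rfl⟩ := exists_pow_apply_eq τ b
      rw [cycleMap_pow_apply he', cycleMap_pow_apply he, e.apply_symm_apply] }

theorem cycleTransport_pow_apply (e : CycleMins π ≃ CycleMins τ)
    (he : ∀ r, minimalPeriod τ (e r) = minimalPeriod π r) (r : CycleMins π) (m : ℕ) :
    cycleTransport e he ((π ^ m) r) = (τ ^ m) (e r) :=
  cycleMap_pow_apply he r m

theorem cycleTransport_apply_perm (e : CycleMins π ≃ CycleMins τ)
    (he : ∀ r, minimalPeriod τ (e r) = minimalPeriod π r) (a : α) :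
    cycleTransport e he (π a) = τ (cycleTransport e he a) := by
  obtain ⟨r, m, rfl⟩ := exists_pow_apply_eq π a
  rw [← mul_apply, ← pow_succ', cycleTransport_pow_apply, cycleTransport_pow_apply, pow_succ',
    mul_apply]

end Equiv.Perm

namespace WreathProduct

open Equiv Perm Function

variable {G : Type*} [Group G] {n : ℕ}

theorem mul_left_apply (a b : WreathProduct G n) (p : Fin n) :
    (a * b).left p = a.left p * b.left (a.right⁻¹ p) := rfl

theorem inv_left_apply (a : WreathProduct G n) (p : Fin n) :
    a⁻¹.left p = (a.left (a.right p))⁻¹ := rfl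

theorem pow_right (a : WreathProduct G n) (m : ℕ) : (a ^ m).right = a.right ^ m :=
  map_pow SemidirectProduct.rightHom a m

theorem conj_right (c a : WreathProduct G n) :
    (c * a * c⁻¹).right = c.right * a.right * c.right⁻¹ := rfl

theorem conj_left_apply (c z : WreathProduct G n) {i : Fin n} (hi : z.right i = i) :
    (c * z * c⁻¹).left (c.right i) =
      c.left (c.right i) * z.left i * (c.left (c.right i))⁻¹ := by
  have : z.right.symm i = i := z.right.symm_apply_eq.2 hi.symm
  simp [mul_left_apply, inv_left_apply, this]

theorem pow_succ_left_pow_apply (h : WreathProduct G n) (i : Fin n) (m : ℕ) :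
    (h ^ (m + 1)).left ((h.right ^ (m + 1)) i) =
      h.left ((h.right ^ (m + 1)) i) * (h ^ m).left ((h.right ^ m) i) := by
  rw [pow_succ', mul_left_apply]
  simp [pow_succ']

theorem pow_add_left_pow_apply (h : WreathProduct G n) {i : Fin n} {k : ℕ}
    (hk : (h.right ^ k) i = i) (m : ℕ) :
    (h ^ (m + k)).left ((h.right ^ (m + k)) i) =
      (h ^ m).left ((h.right ^ m) i) * (h ^ k).left i := by
  rw [pow_add, mul_left_apply, pow_right, pow_add, mul_apply, hk]
  simp

theorem list_prod_eq_pow_left (h : WreathProduct G n) (i : Fin n) (m : ℕ) :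
    ((List.range m).map fun j => h.left ((h.right ^ j) (h.right i))).reverse.prod =
      (h ^ m).left ((h.right ^ m) i) := by
  induction m with
  | zero => rfl
  | succ m ih =>
    rw [List.range_succ, List.map_append, List.reverse_append, List.prod_append, ih,
      pow_succ_left_pow_apply]
    simp [pow_succ]

theorem cycleProd_apply_eq_pow_left (h : WreathProduct G n) (i : Fin n) :
    cycleProd h (h.right i) = (h ^ minimalPeriod h.right i).left i := by
  rw [cycleProd, minimalPeriod_apply_eq, list_prod_eq_pow_left, pow_minimalPeriod_apply]

theorem mk_pow_minimalPeriod_left (h : WreathProduct G n) (i : Fin n) :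
    ConjClasses.mk ((h ^ minimalPeriod h.right i).left i) = ConjClasses.mk (cycleProd h i) := by
  obtain ⟨j, rfl⟩ := h.right.surjective i
  have hfix : (h ^ minimalPeriod h.right j).right j = j := by
    rw [pow_right, pow_minimalPeriod_apply]
  have hconj := conj_left_apply h _ hfix
  rw [(Commute.self_pow h _).eq, mul_inv_cancel_right] at hconj
  rw [minimalPeriod_apply_eq, hconj, cycleProd_apply_eq_pow_left, ConjClasses.mk_eq_mk_iff_isConj]
  exact (isConj_iff.2 ⟨_, rfl⟩).symm

theorem mk_cycleProd_conj (c x : WreathProduct G n) (i : Fin n) :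
    ConjClasses.mk (cycleProd (c * x * c⁻¹) (c.right i)) = ConjClasses.mk (cycleProd x i) := by
  have hfix : (x ^ minimalPeriod x.right i).right i = i := by
    rw [pow_right, pow_minimalPeriod_apply]
  rw [← mk_pow_minimalPeriod_left, ← mk_pow_minimalPeriod_left, conj_right,
    minimalPeriod_conj_apply, conj_pow, conj_left_apply c _ hfix, ConjClasses.mk_eq_mk_iff_isConj]
  exact (isConj_iff.2 ⟨_, rfl⟩).symm

noncomputable def cycleKey (h : WreathProduct G n) (i : Fin n) : ℕ × ConjClasses G :=
  (minimalPeriod h.right i, ConjClasses.mk (cycleProd h i))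

theorem cycleKey_conj (c x : WreathProduct G n) (i : Fin n) :
    cycleKey (c * x * c⁻¹) (c.right i) = cycleKey x i := by
  rw [cycleKey, cycleKey, mk_cycleProd_conj, conj_right, minimalPeriod_conj_apply]

theorem cycleKey_apply (h : WreathProduct G n) (i : Fin n) :
    cycleKey h (h.right i) = cycleKey h i := by
  simpa using cycleKey_conj h h i

theorem count_wrType (h : WreathProduct G n) (C : ConjClasses G) (k : ℕ) :
    (wrType h C).count k = Nat.card {r : CycleMins h.right // cycleKey h r = (k, C)} := by
  classical
  rw [wrType, Multiset.count_map, Nat.card_congr (Equiv.subtypeSubtypeEquivSubtypeInter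
    (IsCycleMin h.right) (fun i => cycleKey h i = (k, C))), Nat.card_eq_fintype_card,
    Fintype.card_subtype, ← Finset.filter_val, Finset.card_val, Finset.filter_filter]
  congr 1
  ext i
  simp only [Finset.mem_filter, Finset.mem_univ, true_and, cycleKey, IsCycleMin, Prod.mk.injEq,
    eq_comm (a := k)]
  tauto

theorem wrType_eq_iff {x y : WreathProduct G n} :
    wrType x = wrType y ↔ ∃ e : CycleMins x.right ≃ CycleMins y.right,
      ∀ r, cycleKey y (e r) = cycleKey x r := by
  simp only [funext_iff, Multiset.ext, count_wrType]
  constructor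
  · intro H
    have hfib : ∀ v, Nonempty ({r : CycleMins x.right // cycleKey x r = v} ≃
        {t : CycleMins y.right // cycleKey y t = v}) :=
      fun ⟨k, C⟩ => Finite.card_eq.1 (H C k)
    exact ⟨Equiv.ofFiberEquiv fun v => (hfib v).some,
      Equiv.ofFiberEquiv_map (g := fun t : CycleMins y.right => cycleKey y t) _⟩
  · rintro ⟨e, he⟩ C k
    exact Nat.card_congr (e.subtypeEquiv fun r => by rw [he])

theorem exists_cycleKey_equiv_of_isConj {x y : WreathProduct G n} (hxy : IsConj x y) :
    ∃ e : CycleMins x.right ≃ CycleMins y.right,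
      ∀ r, cycleKey y (e r) = cycleKey x r := by
  obtain ⟨c, rfl⟩ := isConj_iff.1 hxy
  refine ⟨cycleMinConjEquiv (conj_right c x), fun r => ?_⟩
  rw [← cycleKey_conj c x r]
  exact (sameCycle_cycleMinConjEquiv _ r).apply_eq_of_invariant (cycleKey_apply _)

theorem semiconjBy_mk {x y : WreathProduct G n} {σ : Perm (Fin n)} {u : Fin n → G}
    (hσ : ∀ q, σ (x.right q) = y.right (σ q))
    (hu : ∀ q, u (x.right q) * x.left (x.right q) = y.left (σ (x.right q)) * u q) :
    SemiconjBy (⟨fun p => u (σ⁻¹ p), σ⟩ : WreathProduct G n) x y := by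
  refine SemidirectProduct.ext (funext fun p => ?_) (Equiv.ext hσ)
  obtain ⟨q, rfl⟩ := (σ * x.right).surjective p
  have hq : y.right⁻¹ ((σ * x.right) q) = σ q := by simp [hσ]
  rw [mul_left_apply, mul_left_apply, hq]
  simpa using hu q

theorem isConj_of_cycleKey_equiv {x y : WreathProduct G n}
    (e : CycleMins x.right ≃ CycleMins y.right)
    (he : ∀ r, cycleKey y (e r) = cycleKey x r) : IsConj x y := by
  have hper (r : CycleMins x.right) : minimalPeriod y.right (e r) = minimalPeriod x.right r :=
    congrArg Prod.fst (he r)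
  have hw (r : CycleMins x.right) : ∃ w, w * (x ^ minimalPeriod x.right r).left r * w⁻¹ =
      (y ^ minimalPeriod x.right r).left (e r) := by
    rw [← isConj_iff, ← ConjClasses.mk_eq_mk_iff_isConj, mk_pow_minimalPeriod_left, ← hper,
      mk_pow_minimalPeriod_left]
    exact (congrArg Prod.snd (he r)).symm
  choose w hw using hw
  let A (r : CycleMins x.right) (m : ℕ) :=
    (y ^ m).left ((y.right ^ m) (e r)) * w r * ((x ^ m).left ((x.right ^ m) r))⁻¹
  have hA r : Periodic (A r) (minimalPeriod x.right r) := fun m => by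
    have hyk : (y.right ^ minimalPeriod x.right r) (e r) = e r := by
      rw [← hper, pow_minimalPeriod_apply]
    simp only [A]
    rw [pow_add_left_pow_apply _ hyk, pow_add_left_pow_apply _ (pow_minimalPeriod_apply _ _),
      ← hw r]
    group
  refine isConj_iff.2 ⟨_, mul_inv_eq_of_eq_mul
    (semiconjBy_mk (u := cycleLift x.right A) (cycleTransport_apply_perm e hper) fun q => ?_)⟩
  obtain ⟨r, m, rfl⟩ := exists_pow_apply_eq x.right q
  rw [← mul_apply, ← pow_succ', cycleLift_pow_apply hA, cycleLift_pow_apply hA,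
    cycleTransport_pow_apply]
  simp only [A]
  rw [pow_succ_left_pow_apply x, pow_succ_left_pow_apply y]
  group

end WreathProduct

theorem conj_iff_same_type_general (G : Type) [Group G] (n : ℕ)
    (x y : WreathProduct G n) :
    IsConj x y ↔ wrType x = wrType y := by
  rw [WreathProduct.wrType_eq_iff]
  exact ⟨WreathProduct.exists_cycleKey_equiv_of_isConj,
    fun ⟨e, he⟩ => WreathProduct.isConj_of_cycleKey_equiv e he⟩

/-- Two elements of the wreath product `G ≀ Sₙ` are conjugate if and only if
they have the same type, i.e. for every conjugacy class `C` of `G` the multiset of lengths of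
cycles (of the permutation part) whose cycle product lies in `C` is the same for both. -/
theorem conj_iff_same_type (G : Type) [Group G] [Fintype G] (n : ℕ) (hn : 0 < n)
    (x y : WreathProduct G n) :
    IsConj x y ↔ wrType x = wrType y :=
  conj_iff_same_type_general G n x y
end

section
/- The Young–Jucys–Murphy elements X_1, X_2, …, X_n of ℂ[G≀S_n] pairwise commute, and moreover each X_i commutes with g^{(l)} for every g ∈ G and 1 ≤ l ≤ n. -/
/-- `g^{(i)}` : the element of `G ≀ Sₙ` with `g` in the `i`-th coordinate. -/
def gAt {G : Type*} [Group G] {n : ℕ} (i : Fin n) (g : G) : WreathProduct G n :=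
  SemidirectProduct.inl (Pi.mulSingle i g)

/-- A permutation viewed inside `G ≀ Sₙ`. -/
def pIn {G : Type*} [Group G] {n : ℕ} (π : Equiv.Perm (Fin n)) : WreathProduct G n :=
  SemidirectProduct.inr π

/-- The Young–Jucys–Murphy element with 0-based index: for `i : Fin n`, `YJM G n i` is the
element `X_{i+1}` (1-based), namely `X_{i+1} = Σ_{k<i} Σ_{g∈G} (g⁻¹)^{(k)} g^{(i)} (k,i)`. -/
noncomputable def YJM (G : Type*) [Group G] [Fintype G] (n : ℕ) (i : Fin n) :
    MonoidAlgebra ℂ (WreathProduct G n) :=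
  ∑ k ∈ Finset.univ.filter (fun k : Fin n => k < i), ∑ g : G,
    MonoidAlgebra.of ℂ (WreathProduct G n)
      (gAt k g⁻¹ * gAt i g * pIn (Equiv.swap k i))

open Equiv Finset

variable {G : Type*} [Group G] {n : ℕ}

def yjmTerm (k j : Fin n) (g : G) : WreathProduct G n :=
  gAt k g⁻¹ * gAt j g * pIn (swap k j)

lemma yjmTerm_eq_mk (k j : Fin n) (g : G) :
    yjmTerm k j g = ⟨Pi.mulSingle k g⁻¹ * Pi.mulSingle j g, swap k j⟩ := by
  rw [yjmTerm, gAt, gAt, pIn, ← map_mul, ← SemidirectProduct.mk_eq_inl_mul_inr]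

lemma wreathHom_apply (π : Perm (Fin n)) (f : Fin n → G) (x : Fin n) :
    wreathHom G n π f x = f (π.symm x) :=
  rfl

lemma wreathHom_mulSingle (π : Perm (Fin n)) (i : Fin n) (g : G) :
    wreathHom G n π (Pi.mulSingle i g) = Pi.mulSingle (π i) g := by
  ext x
  simp_rw [wreathHom_apply, Pi.mulSingle_apply, π.symm_apply_eq]

lemma mul_mulSingle_mul_mulSingle {a j : Fin n} (haj : a ≠ j) (f : Fin n → G) (h : G) :
    f * (Pi.mulSingle a h⁻¹ * Pi.mulSingle j h) =
      Pi.mulSingle a (f j * h * (f a)⁻¹)⁻¹ * Pi.mulSingle j (f j * h * (f a)⁻¹) *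
        wreathHom G n (swap a j) f := by
  ext x
  simp only [Pi.mul_apply, wreathHom_apply, symm_swap]
  rcases eq_or_ne x a with rfl | hxa
  · simp [haj, mul_assoc]
  rcases eq_or_ne x j with rfl | hxj
  · simp [haj.symm, mul_assoc]
  · simp [hxa, hxj, swap_apply_of_ne_of_ne hxa hxj]

lemma mk_mul_yjmTerm (f : Fin n → G) {π : Perm (Fin n)} {m j : Fin n} (hπj : π j = j)
    (hmj : m ≠ j) (h : G) :
    (⟨f, π⟩ : WreathProduct G n) * yjmTerm m j h =
      yjmTerm (π m) j (f j * h * (f (π m))⁻¹) * ⟨f, π⟩ := by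
  have hπm : π m ≠ j := hπj ▸ π.injective.ne hmj
  rw [yjmTerm_eq_mk, yjmTerm_eq_mk]
  refine SemidirectProduct.ext ?_ ?_
  · show f * wreathHom G n π (Pi.mulSingle m h⁻¹ * Pi.mulSingle j h) = _
    rw [map_mul, wreathHom_mulSingle, wreathHom_mulSingle, hπj]
    exact mul_mulSingle_mul_mulSingle hπm f h
  · show π * swap m j = swap (π m) j * π
    rw [mul_swap_eq_swap_mul, hπj]

variable [Fintype G]

local notation "of" => MonoidAlgebra.of ℂ (WreathProduct G n)

lemma YJM_eq_sum (j : Fin n) :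
    YJM G n j = ∑ k ∈ univ.filter (· < j), ∑ g : G, of (yjmTerm k j g) :=
  rfl

lemma commute_of_mk_YJM (f : Fin n → G) {π : Perm (Fin n)} {j : Fin n} (hπj : π j = j)
    (hπ : ∀ k, π k < j ↔ k < j) :
    Commute (of ⟨f, π⟩) (YJM G n j) := by
  have hterm : ∀ k < j,
      of ⟨f, π⟩ * ∑ g, of (yjmTerm k j g) = (∑ g, of (yjmTerm (π k) j g)) * of ⟨f, π⟩ := by
    intro k hk
    rw [mul_sum, sum_mul]
    calc ∑ g, of ⟨f, π⟩ * of (yjmTerm k j g)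
        = ∑ g, of (yjmTerm (π k) j (f j * g * (f (π k))⁻¹)) * of ⟨f, π⟩ := by
          simp only [← map_mul, mk_mul_yjmTerm f hπj hk.ne]
      _ = _ := ((Equiv.mulLeft (f j)).trans (Equiv.mulRight _)).sum_comp
          fun g => of (yjmTerm (π k) j g) * of ⟨f, π⟩
  rw [Commute, SemiconjBy, YJM_eq_sum, mul_sum, sum_mul]
  calc ∑ k ∈ univ.filter (· < j), of ⟨f, π⟩ * ∑ g, of (yjmTerm k j g)
      = ∑ k ∈ univ.filter (· < j), (∑ g, of (yjmTerm (π k) j g)) * of ⟨f, π⟩ :=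
        sum_congr rfl fun k hk => hterm k (mem_filter.1 hk).2
    _ = _ := sum_equiv π (by simp [hπ]) fun _ _ => rfl

lemma commute_of_gAt_YJM (l j : Fin n) (g : G) : Commute (of (gAt l g)) (YJM G n j) :=
  commute_of_mk_YJM _ (Perm.one_apply j) fun _ => Iff.rfl

lemma commute_of_yjmTerm_YJM {k i j : Fin n} (hki : k < i) (hij : i < j) (g : G) :
    Commute (of (yjmTerm k i g)) (YJM G n j) := by
  rw [yjmTerm_eq_mk]
  refine commute_of_mk_YJM _ (swap_apply_of_ne_of_ne (hki.trans hij).ne' hij.ne') fun m => ?_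
  rw [swap_apply_def]
  split_ifs <;> subst_vars <;> omega

lemma commute_YJM_of_lt {i j : Fin n} (hij : i < j) : Commute (YJM G n i) (YJM G n j) := by
  rw [YJM_eq_sum i]
  exact .sum_left _ _ _ fun k hk => .sum_left _ _ _ fun g _ =>
    commute_of_yjmTerm_YJM (mem_filter.1 hk).2 hij g

/-- The Young–Jucys–Murphy elements `X_1, …, X_n` pairwise commute, and each
`X_i` commutes with `g^{(l)}` for every `g ∈ G` and every coordinate `l`. -/
theorem YJM_commute (G : Type) [Group G] [Fintype G] (n : ℕ) :
    (∀ i j : Fin n, YJM G n i * YJM G n j = YJM G n j * YJM G n i) ∧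
    (∀ (i l : Fin n) (g : G),
      YJM G n i * MonoidAlgebra.of ℂ (WreathProduct G n) (gAt l g) =
        MonoidAlgebra.of ℂ (WreathProduct G n) (gAt l g) * YJM G n i) := by
  refine ⟨fun i j => ?_, fun i l g => (commute_of_gAt_YJM l i g).symm.eq⟩
  rcases lt_trichotomy i j with h | rfl | h
  · exact (commute_YJM_of_lt h).eq
  · rfl
  · exact (commute_YJM_of_lt h).symm.eq
end

section
/- Let I be a finite set, and let μ be a Young I-diagram with n boxes (a function from I to Young diagrams with n boxes in total). Then any two standard Young I-tableaux of shape μ can be obtained from one another by a finite sequence of admissible transpositions; conversely, admissible transpositions preserve the shape, so two standard Young I-tableaux are related by a sequence of admissible transpositions if and only if they have the same shape. -/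
/-- A standard Young `I`-tableau with `n` boxes: a Young `I`-diagram (a function from `I` to
Young diagrams with `n` boxes in total) whose boxes are filled bijectively with `1,…,n`,
strictly increasing along each row and each column of every diagram.  Entries outside the
boxes are normalized to `0`. -/
structure StdYIT (I : Type*) [Fintype I] (n : ℕ) where
  shape : I → YoungDiagram
  entry : I → ℕ × ℕ → ℕ
  total_card : ∑ i : I, (shape i).card = n
  zero_outside : ∀ i c, c ∉ (shape i).cells → entry i c = 0
  mem_range : ∀ i, ∀ c ∈ (shape i).cells, entry i c ∈ Finset.Icc 1 n
  unique_fill : ∀ m ∈ Finset.Icc 1 n,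
    ∃! p : I × (ℕ × ℕ), p.2 ∈ (shape p.1).cells ∧ entry p.1 p.2 = m
  row_strict : ∀ i r c₁ c₂, c₁ < c₂ → (r, c₁) ∈ (shape i).cells → (r, c₂) ∈ (shape i).cells →
    entry i (r, c₁) < entry i (r, c₂)
  col_strict : ∀ i r₁ r₂ c, r₁ < r₂ → (r₁, c) ∈ (shape i).cells → (r₂, c) ∈ (shape i).cells →
    entry i (r₁, c) < entry i (r₂, c)

/-- `T₂` is obtained from `T₁` by an admissible transposition: exchanging the entries `j` and
`j+1`, where the boxes containing `j` and `j+1` either lie in different Young diagrams, or lie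
in the same Young diagram but in different rows and different columns. -/
def AdmissibleStep {I : Type*} [Fintype I] {n : ℕ} (T₁ T₂ : StdYIT I n) : Prop :=
  T₁.shape = T₂.shape ∧
  ∃ j : ℕ, 1 ≤ j ∧ j + 1 ≤ n ∧
    (∀ i c, T₂.entry i c =
      if T₁.entry i c = j then j + 1 else if T₁.entry i c = j + 1 then j else T₁.entry i c) ∧
    (∀ i c c', c ∈ (T₁.shape i).cells → c' ∈ (T₁.shape i).cells →
      T₁.entry i c = j → T₁.entry i c' = j + 1 → c.1 ≠ c'.1 ∧ c.2 ≠ c'.2)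

namespace StdYITAux

variable {I : Type} [Fintype I] {n : ℕ}

/-- The set of all boxes of a Young `I`-diagram. -/
noncomputable def boxes (μ : I → YoungDiagram) : Finset (I × (ℕ × ℕ)) :=
  letI := Classical.decEq I
  Finset.univ.biUnion fun i => ((μ i).cells).image fun c => (i, c)

lemma mem_boxes {μ : I → YoungDiagram} {p : I × (ℕ × ℕ)} :
    p ∈ boxes μ ↔ p.2 ∈ (μ p.1).cells := by
  obtain ⟨i, c⟩ := p
  simp only [boxes, Finset.mem_biUnion, Finset.mem_univ, true_and, Finset.mem_image,
    Prod.mk.injEq]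
  constructor
  · rintro ⟨i', c', hc', rfl, rfl⟩; exact hc'
  · intro h; exact ⟨i, c, h, rfl, rfl⟩

lemma entry_mem (T : StdYIT I n) {b : I × (ℕ × ℕ)} (hb : b ∈ boxes T.shape) :
    T.entry b.1 b.2 ∈ Finset.Icc 1 n :=
  T.mem_range b.1 b.2 (mem_boxes.mp hb)

lemma entry_inj (T : StdYIT I n) {b b' : I × (ℕ × ℕ)} (hb : b ∈ boxes T.shape)
    (hb' : b' ∈ boxes T.shape) (h : T.entry b.1 b.2 = T.entry b'.1 b'.2) : b = b' := by
  obtain ⟨p, -, hup⟩ := T.unique_fill _ (entry_mem T hb)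
  have h1 := hup b ⟨mem_boxes.mp hb, rfl⟩
  have h2 := hup b' ⟨mem_boxes.mp hb', h.symm⟩
  rw [h1, h2]

lemma entry_eq_card (T : StdYIT I n) {b : I × (ℕ × ℕ)} (hb : b ∈ boxes T.shape) :
    T.entry b.1 b.2
      = ((boxes T.shape).filter fun b' => T.entry b'.1 b'.2 ≤ T.entry b.1 b.2).card := by
  have hbe := Finset.mem_Icc.mp (entry_mem T hb)
  have hcard : ((boxes T.shape).filter fun b' => T.entry b'.1 b'.2 ≤ T.entry b.1 b.2).card
      = (Finset.Icc 1 (T.entry b.1 b.2)).card := by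
    apply Finset.card_bij (fun b' _ => T.entry b'.1 b'.2)
    · intro a ha
      rw [Finset.mem_filter] at ha
      rw [Finset.mem_Icc]
      exact ⟨(Finset.mem_Icc.mp (entry_mem T ha.1)).1, ha.2⟩
    · intro a ha a' ha' h
      exact entry_inj T (Finset.mem_filter.mp ha).1 (Finset.mem_filter.mp ha').1 h
    · intro m hm
      rw [Finset.mem_Icc] at hm
      have hm' : m ∈ Finset.Icc 1 n := Finset.mem_Icc.mpr ⟨hm.1, hm.2.trans hbe.2⟩
      obtain ⟨p, ⟨hp1, hp2⟩, -⟩ := T.unique_fill m hm'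
      exact ⟨p, Finset.mem_filter.mpr ⟨mem_boxes.mpr hp1, by rw [hp2]; exact hm.2⟩, hp2⟩
  rw [hcard, Nat.card_Icc]
  omega

/-- Number of inversions of `T` relative to `T₂`. -/
noncomputable def invCount (T T₂ : StdYIT I n) : ℕ :=
  (((boxes T.shape) ×ˢ (boxes T.shape)).filter fun p =>
    T.entry p.1.1 p.1.2 < T.entry p.2.1 p.2.2 ∧
      T₂.entry p.2.1 p.2.2 < T₂.entry p.1.1 p.1.2).card

lemma eq_of_invCount_zero {T T₂ : StdYIT I n} (hsh : T.shape = T₂.shape)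
    (h : invCount T T₂ = 0) : T = T₂ := by
  have hempty := Finset.card_eq_zero.mp h
  have key : ∀ b b' : I × (ℕ × ℕ), b ∈ boxes T.shape → b' ∈ boxes T.shape →
      ¬(T.entry b.1 b.2 < T.entry b'.1 b'.2 ∧ T₂.entry b'.1 b'.2 < T₂.entry b.1 b.2) := by
    intro b b' hb hb' hcon
    have : (b, b') ∈ (((boxes T.shape) ×ˢ (boxes T.shape)).filter fun p =>
        T.entry p.1.1 p.1.2 < T.entry p.2.1 p.2.2 ∧
          T₂.entry p.2.1 p.2.2 < T₂.entry p.1.1 p.1.2) :=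
      Finset.mem_filter.mpr ⟨Finset.mem_product.mpr ⟨hb, hb'⟩, hcon⟩
    rw [hempty] at this
    exact absurd this (Finset.notMem_empty _)
  have hEnt : ∀ b : I × (ℕ × ℕ), b ∈ boxes T.shape → T.entry b.1 b.2 = T₂.entry b.1 b.2 := by
    intro b hb
    have hb₂ : b ∈ boxes T₂.shape := by rwa [← hsh]
    have hfeq : ((boxes T.shape).filter fun b' => T.entry b'.1 b'.2 ≤ T.entry b.1 b.2)
        = ((boxes T₂.shape).filter fun b' => T₂.entry b'.1 b'.2 ≤ T₂.entry b.1 b.2) := by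
      rw [← hsh]
      apply Finset.filter_congr
      intro b' hb'
      constructor
      · intro hle
        by_contra hgt
        push_neg at hgt
        rcases eq_or_lt_of_le hle with heq | hlt
        · have : b' = b := entry_inj T hb' hb heq
          subst this; omega
        · exact key b' b hb' hb ⟨hlt, hgt⟩
      · intro hle
        by_contra hgt
        push_neg at hgt
        rcases eq_or_lt_of_le hle with heq | hlt
        · have : b' = b := entry_inj T₂ (hsh ▸ hb') hb₂ heq
          subst this; omega
        · exact key b b' hb hb' ⟨hgt, hlt⟩
    rw [entry_eq_card T hb, entry_eq_card T₂ hb₂, hfeq]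
  have hE : T.entry = T₂.entry := by
    funext i c
    by_cases hc : c ∈ (T.shape i).cells
    · exact hEnt (i, c) (mem_boxes.mpr hc)
    · rw [T.zero_outside i c hc, T₂.zero_outside i c (hsh ▸ hc)]
  obtain ⟨s₁, e₁, _, _, _, _, _, _⟩ := T
  obtain ⟨s₂, e₂, _, _, _, _, _, _⟩ := T₂
  have hs' : s₁ = s₂ := hsh
  have he' : e₁ = e₂ := hE
  subst hs'; subst he'
  rfl

/-- Swap the values `j` and `j+1`. -/
def swapVal (j a : ℕ) : ℕ := if a = j then j + 1 else if a = j + 1 then j else a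

lemma swapVal_inj {j a b : ℕ} (h : swapVal j a = swapVal j b) : a = b := by
  unfold swapVal at h; split_ifs at h <;> omega

lemma swapVal_swapVal (j a : ℕ) : swapVal j (swapVal j a) = a := by
  unfold swapVal; split_ifs <;> first | exact absurd rfl (by assumption) | exact (‹False›).elim | omega

lemma swapVal_lt_iff (j a b : ℕ) :
    swapVal j a < swapVal j b ↔ (a < b ∧ ¬(a = j ∧ b = j + 1)) ∨ (a = j + 1 ∧ b = j) := by
  unfold swapVal; split_ifs <;> first | exact absurd rfl (by assumption) | exact (‹False›).elim | omega

/-- The tableau obtained from `T` by swapping the entries `j` and `j+1`. -/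
def swapTab (T : StdYIT I n) (j : ℕ) (hj1 : 1 ≤ j) (hjn : j + 1 ≤ n)
    (u v : I × (ℕ × ℕ)) (hu : u ∈ boxes T.shape) (hv : v ∈ boxes T.shape)
    (hTu : T.entry u.1 u.2 = j) (hTv : T.entry v.1 v.2 = j + 1)
    (hne : u.1 = v.1 → u.2.1 ≠ v.2.1 ∧ u.2.2 ≠ v.2.2) : StdYIT I n where
  shape := T.shape
  entry i c := swapVal j (T.entry i c)
  total_card := T.total_card
  zero_outside i c hc := by
    show swapVal j (T.entry i c) = 0
    rw [T.zero_outside i c hc]; unfold swapVal; split_ifs <;> first | exact absurd rfl (by assumption) | exact (‹False›).elim | omega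
  mem_range i c hc := by
    have := Finset.mem_Icc.mp (T.mem_range i c hc)
    show swapVal j (T.entry i c) ∈ Finset.Icc 1 n
    rw [Finset.mem_Icc]; unfold swapVal; split_ifs <;> first | exact absurd rfl (by assumption) | exact (‹False›).elim | omega
  unique_fill m hm := by
    have hm' := Finset.mem_Icc.mp hm
    have hsm : swapVal j m ∈ Finset.Icc 1 n := by
      rw [Finset.mem_Icc]; unfold swapVal; split_ifs <;> first | exact absurd rfl (by assumption) | exact (‹False›).elim | omega
    obtain ⟨p, ⟨hp1, hp2⟩, hup⟩ := T.unique_fill (swapVal j m) hsm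
    refine ⟨p, ⟨hp1, show swapVal j (T.entry p.1 p.2) = m by rw [hp2, swapVal_swapVal]⟩, ?_⟩
    rintro q ⟨hq1, hq2⟩
    apply hup
    refine ⟨hq1, ?_⟩
    have hq2' : swapVal j (T.entry q.1 q.2) = m := hq2
    have : swapVal j (swapVal j (T.entry q.1 q.2)) = swapVal j m := by rw [hq2']
    rwa [swapVal_swapVal] at this
  row_strict i r c₁ c₂ hlt h1 h2 := by
    have ha := T.row_strict i r c₁ c₂ hlt h1 h2
    show swapVal j (T.entry i (r, c₁)) < swapVal j (T.entry i (r, c₂))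
    rw [swapVal_lt_iff]
    left
    refine ⟨ha, ?_⟩
    rintro ⟨e1, e2⟩
    have hu' : u = (i, (r, c₁)) :=
      entry_inj T hu (mem_boxes.mpr h1) (by rw [hTu, e1])
    have hv' : v = (i, (r, c₂)) :=
      entry_inj T hv (mem_boxes.mpr h2) (by rw [hTv, e2])
    have := hne (by rw [hu', hv'])
    rw [hu', hv'] at this
    exact this.1 rfl
  col_strict i r₁ r₂ c hlt h1 h2 := by
    have ha := T.col_strict i r₁ r₂ c hlt h1 h2
    show swapVal j (T.entry i (r₁, c)) < swapVal j (T.entry i (r₂, c))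
    rw [swapVal_lt_iff]
    left
    refine ⟨ha, ?_⟩
    rintro ⟨e1, e2⟩
    have hu' : u = (i, (r₁, c)) :=
      entry_inj T hu (mem_boxes.mpr h1) (by rw [hTu, e1])
    have hv' : v = (i, (r₂, c)) :=
      entry_inj T hv (mem_boxes.mpr h2) (by rw [hTv, e2])
    have := hne (by rw [hu', hv'])
    rw [hu', hv'] at this
    exact this.2 rfl

lemma exists_adjacent (T T₂ : StdYIT I n)
    {b b' : I × (ℕ × ℕ)} (hb : b ∈ boxes T.shape) (hb' : b' ∈ boxes T.shape)
    (hlt : T.entry b.1 b.2 < T.entry b'.1 b'.2)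
    (hgt : T₂.entry b'.1 b'.2 < T₂.entry b.1 b.2) :
    ∃ (j : ℕ) (u v : I × (ℕ × ℕ)), 1 ≤ j ∧ j + 1 ≤ n ∧ u ∈ boxes T.shape ∧ v ∈ boxes T.shape ∧
      T.entry u.1 u.2 = j ∧ T.entry v.1 v.2 = j + 1 ∧
      T₂.entry v.1 v.2 < T₂.entry u.1 u.2 := by
  classical
  have ha := Finset.mem_Icc.mp (entry_mem T hb)
  have hc := Finset.mem_Icc.mp (entry_mem T hb')
  set a := T.entry b.1 b.2 with ha_def
  set c := T.entry b'.1 b'.2 with hc_def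
  let pos : ℕ → I × (ℕ × ℕ) := fun m =>
    if h : m ∈ Finset.Icc 1 n then (T.unique_fill m h).choose else b
  have hpos : ∀ m, m ∈ Finset.Icc 1 n →
      pos m ∈ boxes T.shape ∧ T.entry (pos m).1 (pos m).2 = m := by
    intro m hm
    have hspec := (T.unique_fill m hm).choose_spec.1
    simp only [pos, dif_pos hm]
    exact ⟨mem_boxes.mpr hspec.1, hspec.2⟩
  have hposE : ∀ p, p ∈ boxes T.shape → pos (T.entry p.1 p.2) = p := by
    intro p hp
    have hm := entry_mem T hp
    have hspec := (T.unique_fill _ hm).choose_spec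
    simp only [pos, dif_pos hm]
    exact (hspec.2 p ⟨mem_boxes.mp hp, rfl⟩).symm
  let g : ℕ → ℕ := fun m => T₂.entry (pos m).1 (pos m).2
  have key : ∃ k, a ≤ k ∧ k + 1 ≤ c ∧ g (k + 1) < g k := by
    by_contra hno
    push_neg at hno
    have mono : ∀ k, a + k ≤ c → g a ≤ g (a + k) := by
      intro k
      induction k with
      | zero => intro _; exact le_refl _
      | succ k ih =>
        intro hk
        have h1 := ih (by omega)
        have h2 := hno (a + k) (by omega) (by omega)
        calc g a ≤ g (a + k) := h1
          _ ≤ g (a + k + 1) := h2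
    have hm := mono (c - a) (by omega)
    rw [show a + (c - a) = c by omega] at hm
    have hga : g a = T₂.entry b.1 b.2 := by
      simp only [g, ha_def]
      rw [hposE b hb]
    have hgc : g c = T₂.entry b'.1 b'.2 := by
      simp only [g, hc_def]
      rw [hposE b' hb']
    rw [hga, hgc] at hm
    omega
  obtain ⟨k, hk1, hk2, hk3⟩ := key
  have hkm : k ∈ Finset.Icc 1 n := Finset.mem_Icc.mpr ⟨by omega, by omega⟩
  have hkm' : k + 1 ∈ Finset.Icc 1 n := Finset.mem_Icc.mpr ⟨by omega, by omega⟩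
  obtain ⟨hu, hTu⟩ := hpos k hkm
  obtain ⟨hv, hTv⟩ := hpos (k + 1) hkm'
  exact ⟨k, pos k, pos (k + 1), by omega, by omega, hu, hv, hTu, hTv, hk3⟩

lemma exists_step (T T₂ : StdYIT I n) (hsh : T.shape = T₂.shape)
    (hM : 0 < invCount T T₂) :
    ∃ T' : StdYIT I n, AdmissibleStep T T' ∧ T'.shape = T₂.shape ∧
      invCount T' T₂ < invCount T T₂ := by
  classical
  obtain ⟨p, hp⟩ := Finset.card_pos.mp hM
  rw [Finset.mem_filter] at hp
  obtain ⟨hpmem, hp1, hp2⟩ := hp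
  rw [Finset.mem_product] at hpmem
  obtain ⟨j, u, v, hj1, hjn, hu, hv, hTu, hTv, hT₂uv⟩ :=
    exists_adjacent T T₂ hpmem.1 hpmem.2 hp1 hp2
  -- derive the row/column condition
  have hne : u.1 = v.1 → u.2.1 ≠ v.2.1 ∧ u.2.2 ≠ v.2.2 := by
    intro hi
    obtain ⟨ui, ur, uc⟩ := u
    obtain ⟨vi, vr, vc⟩ := v
    simp only at hi
    subst hi
    have hu2 : (ur, uc) ∈ (T.shape ui).cells := mem_boxes.mp hu
    have hv2 : (vr, vc) ∈ (T.shape ui).cells := mem_boxes.mp hv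
    have hu2' : (ur, uc) ∈ (T₂.shape ui).cells := by rwa [← hsh]
    have hv2' : (vr, vc) ∈ (T₂.shape ui).cells := by rwa [← hsh]
    simp only at hTu hTv hT₂uv ⊢
    constructor
    · intro hr
      subst hr
      rcases lt_trichotomy uc vc with h | h | h
      · have := T₂.row_strict ui ur uc vc h hu2' hv2'
        omega
      · subst h; omega
      · have := T.row_strict ui ur vc uc h hv2 hu2
        omega
    · intro hcc
      subst hcc
      rcases lt_trichotomy ur vr with h | h | h
      · have := T₂.col_strict ui ur vr uc h hu2' hv2'
        omega
      · subst h; omega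
      · have := T.col_strict ui vr ur uc h hv2 hu2
        omega
  refine ⟨swapTab T j hj1 hjn u v hu hv hTu hTv hne, ?_, hsh, ?_⟩
  · refine ⟨rfl, j, hj1, hjn, fun i c => rfl, ?_⟩
    intro i c c' hc hc' hcj hcj'
    have hu' : u = (i, c) := entry_inj T hu (mem_boxes.mpr hc) (by rw [hTu, hcj])
    have hv' : v = (i, c') := entry_inj T hv (mem_boxes.mpr hc') (by rw [hTv, hcj'])
    have := hne (by rw [hu', hv'])
    rw [hu', hv'] at this
    exact this
  · -- the inversion count drops
    have hFeq : (((boxes T.shape) ×ˢ (boxes T.shape)).filter fun p =>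
          swapVal j (T.entry p.1.1 p.1.2) < swapVal j (T.entry p.2.1 p.2.2) ∧
            T₂.entry p.2.1 p.2.2 < T₂.entry p.1.1 p.1.2)
        = (((boxes T.shape) ×ˢ (boxes T.shape)).filter fun p =>
          T.entry p.1.1 p.1.2 < T.entry p.2.1 p.2.2 ∧
            T₂.entry p.2.1 p.2.2 < T₂.entry p.1.1 p.1.2).erase (u, v) := by
      ext q
      rw [Finset.mem_erase, Finset.mem_filter, Finset.mem_filter]
      constructor
      · rintro ⟨hqmem, hqlt, hqgt⟩
        rw [Finset.mem_product] at hqmem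
        rw [swapVal_lt_iff] at hqlt
        rcases hqlt with ⟨hab, hnot⟩ | ⟨e1, e2⟩
        · refine ⟨?_, Finset.mem_product.mpr hqmem, hab, hqgt⟩
          rintro rfl
          exact hnot ⟨hTu, hTv⟩
        · exfalso
          have h1 : q.1 = v := entry_inj T hqmem.1 hv (by rw [e1, hTv])
          have h2 : q.2 = u := entry_inj T hqmem.2 hu (by rw [e2, hTu])
          rw [h1, h2] at hqgt
          omega
      · rintro ⟨hqne, hqmem, hab, hqgt⟩
        rw [Finset.mem_product] at hqmem
        refine ⟨Finset.mem_product.mpr hqmem, ?_, hqgt⟩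
        rw [swapVal_lt_iff]
        left
        refine ⟨hab, ?_⟩
        rintro ⟨e1, e2⟩
        apply hqne
        have h1 : q.1 = u := entry_inj T hqmem.1 hu (by rw [e1, hTu])
        have h2 : q.2 = v := entry_inj T hqmem.2 hv (by rw [e2, hTv])
        rw [← h1, ← h2]
    have huvmem : (u, v) ∈ (((boxes T.shape) ×ˢ (boxes T.shape)).filter fun p =>
        T.entry p.1.1 p.1.2 < T.entry p.2.1 p.2.2 ∧
          T₂.entry p.2.1 p.2.2 < T₂.entry p.1.1 p.1.2) := by
      refine Finset.mem_filter.mpr ⟨Finset.mem_product.mpr ⟨hu, hv⟩, ?_, hT₂uv⟩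
      rw [hTu, hTv]; omega
    show (((boxes T.shape) ×ˢ (boxes T.shape)).filter fun p =>
          swapVal j (T.entry p.1.1 p.1.2) < swapVal j (T.entry p.2.1 p.2.2) ∧
            T₂.entry p.2.1 p.2.2 < T₂.entry p.1.1 p.1.2).card < invCount T T₂
    rw [hFeq, Finset.card_erase_of_mem huvmem]
    have : 0 < invCount T T₂ := hM
    unfold invCount at this ⊢
    omega

end StdYITAux

open StdYITAux in
/-- Two standard Young `I`-tableaux with `n` boxes are related by a finite
sequence of admissible transpositions if and only if they have the same shape. -/
theorem admissible_transpositions_iff_same_shape (I : Type) [Fintype I] (n : ℕ)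
    (T₁ T₂ : StdYIT I n) :
    Relation.ReflTransGen AdmissibleStep T₁ T₂ ↔ T₁.shape = T₂.shape := by
  constructor
  · intro h
    induction h with
    | refl => rfl
    | tail _ hstep ih => exact ih.trans hstep.1
  · intro hsh
    have main : ∀ (N : ℕ) (T : StdYIT I n), invCount T T₂ ≤ N → T.shape = T₂.shape →
        Relation.ReflTransGen AdmissibleStep T T₂ := by
      intro N
      induction N with
      | zero =>
        intro T h hs
        rw [eq_of_invCount_zero hs (Nat.le_zero.mp h)]
      | succ N ih =>
        intro T h hs
        rcases Nat.eq_zero_or_pos (invCount T T₂) with h0 | hpos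
        · rw [eq_of_invCount_zero hs h0]
        · obtain ⟨T', hstep, hsh', hlt⟩ := exists_step T T₂ hs hpos
          exact Relation.ReflTransGen.head hstep (ih T' (by omega) hsh')
    exact main _ T₁ le_rfl hsh
end

section
/- The map sending a standard Young tableau T with n boxes to its content vector (c(b_T(1)), c(b_T(2)), …, c(b_T(n))), where b_T(i) is the box of T containing the entry i and c(b) is the content of box b, is a bijection from the set of standard Young tableaux with n boxes to the set of content vectors of length n. -/
/-- `(a₁,…,aₙ)` is a content vector: `a₁ = 0`; each later value is adjacent to an earlier one;
and between two occurrences of the same value both neighbouring values occur. -/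
def IsContentVector {n : ℕ} (a : Fin n → ℤ) : Prop :=
  (∀ h : 0 < n, a ⟨0, h⟩ = 0) ∧
  (∀ i : Fin n, 0 < (i : ℕ) →
    ∃ j : Fin n, (j : ℕ) < (i : ℕ) ∧ (a j = a i - 1 ∨ a j = a i + 1)) ∧
  (∀ i j : Fin n, (i : ℕ) < (j : ℕ) → a i = a j →
    (∃ k : Fin n, (i : ℕ) < (k : ℕ) ∧ (k : ℕ) < (j : ℕ) ∧ a k = a i - 1) ∧
    (∃ k : Fin n, (i : ℕ) < (k : ℕ) ∧ (k : ℕ) < (j : ℕ) ∧ a k = a i + 1))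

/-- `a` is the content vector of the standard Young tableau `T`: for every box `c` of `T`, the
value of `a` at the (1-based) entry of that box is the content (column − row) of the box. -/
def ContentVecOf {n : ℕ} (T : StdYIT Unit n) (a : Fin n → ℤ) : Prop :=
  ∀ c ∈ (T.shape ()).cells, ∀ m : Fin n, (m : ℕ) + 1 = T.entry () c →
    a m = (c.2 : ℤ) - (c.1 : ℤ)

/-! In a standard tableau the entries increase along each diagonal, so the box holding `m + 1`
is the box of depth `k` on the diagonal of content `a m`, where `k` counts the earlier occurrences
of the value `a m` in the content vector `a`; hence a tableau is determined by its content vector.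
Conversely, placing the entries of a content vector in this way gives a standard tableau: between
two occurrences of a value `d` both `d - 1` and `d + 1` occur, and before the first occurrence of
`d ≠ 0` its neighbour closer to `0` occurs, so the boxes above and to the left of each new box are
already filled. -/

open Function

def cellContent (c : ℕ × ℕ) : ℤ := (c.2 : ℤ) - c.1

/-- The cell of depth `s` (counted from `0`) on the diagonal of content `d`. -/
def diagCell (d : ℤ) (s : ℕ) : ℕ × ℕ := (s + (-d).toNat, s + d.toNat)

@[simp]
lemma cellContent_diagCell (d : ℤ) (s : ℕ) : cellContent (diagCell d s) = d := by
  simp only [cellContent, diagCell]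
  push_cast
  omega

lemma diagCell_strictMono (d : ℤ) : StrictMono (diagCell d) := by
  intro s t h
  simp only [diagCell, Prod.mk_lt_mk]
  omega

lemma eq_diagCell (c : ℕ × ℕ) : c = diagCell (cellContent c) (min c.1 c.2) := by
  simp only [diagCell, cellContent]
  ext <;> dsimp only <;> omega

section Depth

variable {n : ℕ} (a : Fin n → ℤ)

def HasValueAt (d : ℤ) (k : ℕ) : Prop := ∃ h : k < n, a ⟨k, h⟩ = d

instance (d : ℤ) : DecidablePred (HasValueAt a d) :=
  fun _ => inferInstanceAs (Decidable (∃ _, _))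

variable {a} in
lemma hasValueAt_iff {d : ℤ} {j : Fin n} : HasValueAt a d j ↔ a j = d :=
  ⟨fun ⟨_, h⟩ => h, fun h => ⟨j.isLt, h⟩⟩

def depth (m : Fin n) : ℕ := Nat.count (HasValueAt a (a m)) m

def cellOf (m : Fin n) : ℕ × ℕ := diagCell (a m) (depth a m)

lemma cellContent_cellOf (m : Fin n) : cellContent (cellOf a m) = a m :=
  cellContent_diagCell _ _

lemma depth_lt_depth {i j : Fin n} (hij : i < j) (hval : a i = a j) : depth a i < depth a j := by
  rw [depth, depth, hval]
  exact Nat.count_strict_mono (hasValueAt_iff.2 hval) hij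

lemma exists_depth_eq {d : ℤ} {m t : ℕ} (ht : t < Nat.count (HasValueAt a d) m) :
    ∃ j : Fin n, (j : ℕ) < m ∧ a j = d ∧ depth a j = t := by
  have hcard : ∀ hf : (Set.ofPred (HasValueAt a d)).Finite, t < hf.toFinset.card :=
    fun hf => ht.trans_le (Nat.count_le_card hf m)
  obtain ⟨hlt, hval⟩ := Nat.nth_mem t hcard
  refine ⟨⟨_, hlt⟩, Nat.nth_lt_of_lt_count ht, hval, ?_⟩
  rw [depth, hval]
  exact Nat.count_nth hcard

lemma exists_cellOf_eq {d : ℤ} {m : ℕ} {p : ℕ × ℕ} (hp : cellContent p = d)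
    (hcount : min p.1 p.2 < Nat.count (HasValueAt a d) m) :
    ∃ j : Fin n, j < m ∧ cellOf a j = p := by
  obtain ⟨j, hjm, hj, hjd⟩ := exists_depth_eq a hcount
  refine ⟨j, hjm, ?_⟩
  rw [cellOf, hj, hjd, ← hp, ← eq_diagCell]

lemma cellOf_injective : Injective (cellOf a) := by
  intro i j h
  have hval : a i = a j := by simpa only [cellContent_cellOf] using congrArg cellContent h
  have hdepth : depth a i = depth a j :=
    (diagCell_strictMono (a j)).injective (by rwa [cellOf, cellOf, hval] at h)
  rw [depth, depth, hval] at hdepth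
  exact Fin.ext (Nat.count_injective (hasValueAt_iff.2 hval) (hasValueAt_iff.2 rfl) hdepth)

end Depth

namespace IsContentVector

variable {n : ℕ} {a : Fin n → ℤ} (hA : IsContentVector a)
include hA

lemma exists_between {i j : Fin n} (hij : i < j) (hval : a i = a j) {e : ℤ}
    (he : e = a i + 1 ∨ e = a i - 1) : ∃ k, i < k ∧ k < j ∧ a k = e := by
  obtain ⟨⟨k, hik, hkj, hk⟩, ⟨k', hik', hk'j, hk'⟩⟩ := hA.2.2 i j hij hval
  rcases he with rfl | rfl
  · exact ⟨k', hik', hk'j, hk'⟩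
  · exact ⟨k, hik, hkj, hk⟩

lemma exists_lt_eq_of_natAbs_lt (m : Fin n) {e : ℤ} (he : e = a m + 1 ∨ e = a m - 1)
    (habs : e.natAbs < (a m).natAbs) : ∃ j < m, a j = e := by
  induction m using WellFoundedLT.induction generalizing e with
  | _ m ih =>
  have hm : 0 < (m : ℕ) := Nat.pos_of_ne_zero fun h0 => by
    have := hA.1 m.pos
    rw [show (⟨0, m.pos⟩ : Fin n) = m from Fin.ext h0.symm] at this
    omega
  obtain ⟨j, hjm, hj⟩ := hA.2.1 m hm
  by_cases hje : a j = e
  · exact ⟨j, hjm, hje⟩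
  -- `a j` is the neighbour of `a m` away from zero, so `a m` occurred before `j`
  obtain ⟨k, hkj, hk⟩ := ih j hjm (e := a m) (by omega) (by omega)
  obtain ⟨l, _, hlm, hl⟩ := hA.exists_between (hkj.trans hjm) hk (e := e)
    (by rw [hk]; exact he)
  exact ⟨l, hlm, hl⟩

/-- Between consecutive occurrences of `a m` both neighbouring values occur, and before its
first occurrence so does the neighbour closer to zero. -/
lemma depth_add_le_count (m : Fin n) {e : ℤ} (he : e = a m + 1 ∨ e = a m - 1) :
    depth a m + (if e.natAbs < (a m).natAbs then 1 else 0) ≤ Nat.count (HasValueAt a e) m := by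
  induction m using WellFoundedLT.induction with
  | _ m ih =>
  rcases h : depth a m with _ | c
  · split_ifs with habs
    · obtain ⟨j, hjm, hj⟩ := hA.exists_lt_eq_of_natAbs_lt m he habs
      exact Nat.pos_of_ne_zero (Nat.count_ne_iff_exists.2 ⟨j, hjm, hasValueAt_iff.2 hj⟩)
    · exact Nat.zero_le _
  · obtain ⟨p, hpm, hp, hpc⟩ := exists_depth_eq a (d := a m) (t := c)
      (by rw [← depth, h]; omega)
    obtain ⟨k, hpk, hkm, hk⟩ := hA.exists_between (i := p) (j := m) hpm hp (e := e)
      (by rw [hp]; exact he)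
    have ihp := ih p hpm (by rw [hp]; exact he)
    rw [hp, hpc] at ihp
    have hcount : Nat.count (HasValueAt a e) p < Nat.count (HasValueAt a e) m :=
      (Nat.count_monotone _ hpk.le).trans_lt (Nat.count_strict_mono (hasValueAt_iff.2 hk) hkm)
    omega

lemma exists_cellOf_eq_up (m : Fin n) {r : ℕ} (hr : (cellOf a m).1 = r + 1) :
    ∃ j < m, cellOf a j = (r, (cellOf a m).2) := by
  have key := hA.depth_add_le_count m (e := a m + 1) (Or.inl rfl)
  simp only [cellOf, diagCell] at hr ⊢
  refine exists_cellOf_eq a (d := a m + 1) (by simp only [cellContent]; push_cast; omega) ?_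
  split_ifs at key <;> omega

lemma exists_cellOf_eq_left (m : Fin n) {c : ℕ} (hc : (cellOf a m).2 = c + 1) :
    ∃ j < m, cellOf a j = ((cellOf a m).1, c) := by
  have key := hA.depth_add_le_count m (e := a m - 1) (Or.inr rfl)
  simp only [cellOf, diagCell] at hc ⊢
  refine exists_cellOf_eq a (d := a m - 1) (by simp only [cellContent]; push_cast; omega) ?_
  split_ifs at key <;> omega

lemma exists_cellOf_eq_of_lt (m : Fin n) {p : ℕ × ℕ} (hp : p < cellOf a m) :
    ∃ j < m, cellOf a j = p := by
  induction m using WellFoundedLT.induction generalizing p with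
  | _ m ih =>
  have of_le : ∀ j < m, p ≤ cellOf a j → ∃ k < m, cellOf a k = p := fun j hjm hle =>
    (eq_or_lt_of_le hle).elim (fun h => ⟨j, hjm, h.symm⟩)
      (fun h => let ⟨k, hkj, hk⟩ := ih j hjm h; ⟨k, hkj.trans hjm, hk⟩)
  rcases Prod.lt_iff.1 hp with ⟨h1, h2⟩ | ⟨h1, h2⟩
  · obtain ⟨j, hjm, hj⟩ := hA.exists_cellOf_eq_up m (r := (cellOf a m).1 - 1) (by omega)
    exact of_le j hjm (by rw [hj]; exact Prod.mk_le_mk.2 ⟨by omega, h2⟩)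
  · obtain ⟨j, hjm, hj⟩ := hA.exists_cellOf_eq_left m (c := (cellOf a m).2 - 1) (by omega)
    exact of_le j hjm (by rw [hj]; exact Prod.mk_le_mk.2 ⟨h1, by omega⟩)

end IsContentVector

namespace StdYIT

variable {n : ℕ} (T : StdYIT Unit n)

lemma succ_mem_Icc (m : Fin n) : (m : ℕ) + 1 ∈ Finset.Icc 1 n :=
  Finset.mem_Icc.2 ⟨by omega, m.isLt⟩

/-- The box containing the entry `m + 1`. -/
noncomputable def box (m : Fin n) : ℕ × ℕ := (T.unique_fill _ (succ_mem_Icc m)).choose.2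

lemma box_mem (m : Fin n) : T.box m ∈ (T.shape ()).cells :=
  (T.unique_fill _ (succ_mem_Icc m)).choose_spec.1.1

lemma entry_box (m : Fin n) : T.entry () (T.box m) = m + 1 :=
  (T.unique_fill _ (succ_mem_Icc m)).choose_spec.1.2

lemma eq_box_of_entry_eq {m : Fin n} {c : ℕ × ℕ} (hc : c ∈ (T.shape ()).cells)
    (he : T.entry () c = m + 1) : c = T.box m :=
  congrArg Prod.snd ((T.unique_fill _ (succ_mem_Icc m)).choose_spec.2 ((), c) ⟨hc, he⟩)

lemma box_injective : Injective T.box := fun i j h =>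
  Fin.ext (by simpa only [h, T.entry_box, add_left_inj] using (T.entry_box i).symm)

lemma mem_cells_iff {c : ℕ × ℕ} : c ∈ (T.shape ()).cells ↔ ∃ m, T.box m = c := by
  refine ⟨fun hc => ?_, fun ⟨m, hm⟩ => hm ▸ T.box_mem m⟩
  have := Finset.mem_Icc.1 (T.mem_range () c hc)
  exact ⟨⟨T.entry () c - 1, by omega⟩, (T.eq_box_of_entry_eq hc (by simp only; omega)).symm⟩

lemma mem_cells_of_le {p q : ℕ × ℕ} (hpq : p ≤ q) (hq : q ∈ (T.shape ()).cells) :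
    p ∈ (T.shape ()).cells := by
  simpa using (T.shape ()).isLowerSet hpq (by simpa using hq)

lemma entry_lt_entry {p q : ℕ × ℕ} (hpq : p < q) (hq : q ∈ (T.shape ()).cells) :
    T.entry () p < T.entry () q := by
  obtain ⟨p₁, p₂⟩ := p
  obtain ⟨q₁, q₂⟩ := q
  have hp := T.mem_cells_of_le hpq.le hq
  -- pass through the corner `(p₁, q₂)` of the rectangle spanned by `p` and `q`
  have hc : (p₁, q₂) ∈ (T.shape ()).cells :=
    T.mem_cells_of_le (Prod.mk_le_mk.2 ⟨(Prod.mk_le_mk.1 hpq.le).1, le_rfl⟩) hq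
  rcases Prod.mk_lt_mk.1 hpq with ⟨h₁, h₂⟩ | ⟨h₁, h₂⟩
  · calc T.entry () (p₁, p₂) ≤ T.entry () (p₁, q₂) :=
          h₂.eq_or_lt.elim (fun h => h ▸ le_rfl) fun h => (T.row_strict () _ _ _ h hp hc).le
      _ < T.entry () (q₁, q₂) := T.col_strict () _ _ _ h₁ hc hq
  · calc T.entry () (p₁, p₂) < T.entry () (p₁, q₂) := T.row_strict () _ _ _ h₂ hp hc
      _ ≤ T.entry () (q₁, q₂) :=
          h₁.eq_or_lt.elim (fun h => h ▸ le_rfl) fun h => (T.col_strict () _ _ _ h hc hq).le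

lemma exists_box_eq_of_lt {m : Fin n} {p : ℕ × ℕ} (hp : p < T.box m) :
    ∃ j < m, T.box j = p := by
  obtain ⟨j, rfl⟩ := T.mem_cells_iff.1 (T.mem_cells_of_le hp.le (T.box_mem m))
  have := T.entry_lt_entry hp (T.box_mem m)
  rw [T.entry_box, T.entry_box] at this
  exact ⟨j, by rw [Fin.lt_def]; omega, rfl⟩

lemma lt_of_box_lt {i j : Fin n} (h : T.box i < T.box j) : i < j := by
  obtain ⟨k, hkj, hk⟩ := T.exists_box_eq_of_lt h
  exact T.box_injective hk ▸ hkj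

lemma exists_box_eq_between {i j : Fin n} {p : ℕ × ℕ} (hi : T.box i < p) (hj : p < T.box j) :
    ∃ k, i < k ∧ k < j ∧ T.box k = p := by
  obtain ⟨k, hkj, rfl⟩ := T.exists_box_eq_of_lt hj
  exact ⟨k, T.lt_of_box_lt hi, hkj, rfl⟩

lemma box_zero (h : 0 < n) : T.box ⟨0, h⟩ = (0, 0) := by
  by_contra hne
  have hlt : (0, 0) < T.box ⟨0, h⟩ :=
    lt_of_le_of_ne (Prod.mk_le_mk.2 ⟨Nat.zero_le _, Nat.zero_le _⟩) (Ne.symm hne)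
  obtain ⟨j, hj, -⟩ := T.exists_box_eq_of_lt hlt
  exact Nat.not_lt_zero _ hj

lemma eq_of_box_eq {T T' : StdYIT Unit n} (h : T.box = T'.box) : T = T' := by
  have hcells : ∀ c, c ∈ (T.shape ()).cells ↔ c ∈ (T'.shape ()).cells := fun c => by
    rw [T.mem_cells_iff, T'.mem_cells_iff, h]
  have hshape : T.shape = T'.shape := funext fun _ => YoungDiagram.ext (Finset.ext hcells)
  have hentry : T.entry = T'.entry := by
    funext _ c
    by_cases hc : c ∈ (T.shape ()).cells
    · obtain ⟨m, rfl⟩ := T.mem_cells_iff.1 hc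
      rw [T.entry_box, h, T'.entry_box]
    · rw [T.zero_outside () c hc, T'.zero_outside () c ((hcells c).not.1 hc)]
  cases T
  cases T'
  cases hshape
  cases hentry
  rfl

lemma contentVecOf_iff {a : Fin n → ℤ} :
    ContentVecOf T a ↔ ∀ m, a m = cellContent (T.box m) :=
  ⟨fun h m => h _ (T.box_mem m) m (T.entry_box m).symm,
    fun h c hc m hm => by rw [h, ← T.eq_box_of_entry_eq hc hm.symm]; rfl⟩

section

variable {T} {a : Fin n → ℤ} (hT : ContentVecOf T a)
include hT

/-- Boxes of equal content are filled along their diagonal in increasing order. -/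
lemma box_eq_cellOf (m : Fin n) : T.box m = cellOf a m := by
  induction m using WellFoundedLT.induction with
  | _ m ih =>
  set s := min (T.box m).1 (T.box m).2
  have hs : T.box m = diagCell (a m) s := by
    rw [T.contentVecOf_iff.1 hT]
    exact eq_diagCell _
  rw [hs, cellOf]
  congr 1
  apply le_antisymm
  · by_contra! h
    obtain ⟨j, hjm, hj⟩ := T.exists_box_eq_of_lt (by rw [hs]; exact diagCell_strictMono (a m) h)
    rw [ih j hjm, cellOf] at hj
    have hval : a j = a m := by simpa only [cellContent_diagCell] using congrArg cellContent hj
    rw [hval] at hj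
    exact (depth_lt_depth a hjm hval).ne ((diagCell_strictMono (a m)).injective hj)
  · by_contra! h
    obtain ⟨j, hjm, hj, hjd⟩ := exists_depth_eq a (d := a m) h
    have : T.box j = T.box m := by rw [ih j hjm, cellOf, hj, hjd, ← hs]
    exact Fin.ne_of_lt hjm (T.box_injective this)

lemma exists_lt_adjacent_of_pos (m : Fin n) (hm : 0 < (m : ℕ)) :
    ∃ j : Fin n, (j : ℕ) < m ∧ (a j = a m - 1 ∨ a j = a m + 1) := by
  have hcontent := T.contentVecOf_iff.1 hT
  have hnbr : ∀ p, p < T.box m → ∃ j : Fin n, (j : ℕ) < m ∧ a j = cellContent p := fun p hp =>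
    let ⟨j, hjm, hj⟩ := T.exists_box_eq_of_lt hp
    ⟨j, hjm, by rw [hcontent, hj]⟩
  have hpos : 0 < (T.box m).1 ∨ 0 < (T.box m).2 := by
    by_contra! h0
    have : T.box m = T.box ⟨0, m.pos⟩ := by
      rw [T.box_zero]
      ext <;> dsimp only <;> omega
    exact hm.ne' (congrArg Fin.val (T.box_injective this))
  rw [hcontent m]
  rcases hpos with h | h
  · obtain ⟨j, hjm, hj⟩ := hnbr ((T.box m).1 - 1, (T.box m).2)
      (Prod.lt_iff.2 (Or.inl ⟨by dsimp only; omega, le_rfl⟩))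
    exact ⟨j, hjm, Or.inr (by rw [hj]; simp only [cellContent]; omega)⟩
  · obtain ⟨j, hjm, hj⟩ := hnbr ((T.box m).1, (T.box m).2 - 1)
      (Prod.lt_iff.2 (Or.inr ⟨le_rfl, by dsimp only; omega⟩))
    exact ⟨j, hjm, Or.inl (by rw [hj]; simp only [cellContent]; omega)⟩

lemma exists_between_of_eq {i j : Fin n} (hij : i < j) (hval : a i = a j) :
    (∃ k : Fin n, (i : ℕ) < k ∧ (k : ℕ) < j ∧ a k = a i - 1) ∧
    (∃ k : Fin n, (i : ℕ) < k ∧ (k : ℕ) < j ∧ a k = a i + 1) := by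
  have hbetween : ∀ p, T.box i < p → p < T.box j →
      ∃ k : Fin n, (i : ℕ) < k ∧ (k : ℕ) < j ∧ a k = cellContent p := fun p h₁ h₂ =>
    let ⟨k, hik, hkj, hk⟩ := T.exists_box_eq_between h₁ h₂
    ⟨k, hik, hkj, by rw [T.contentVecOf_iff.1 hT, hk]⟩
  have hd := depth_lt_depth a hij hval
  rw [box_eq_cellOf hT i, box_eq_cellOf hT j, cellOf, cellOf, ← hval] at hbetween
  simp only [diagCell, Prod.lt_iff] at hbetween
  -- the cells below and to the right of `T.box i`
  constructor
  · obtain ⟨k, hik, hkj, hk⟩ :=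
      hbetween (depth a i + (-a i).toNat + 1, depth a i + (a i).toNat) (by omega) (by omega)
    exact ⟨k, hik, hkj, by rw [hk]; simp only [cellContent]; push_cast; omega⟩
  · obtain ⟨k, hik, hkj, hk⟩ :=
      hbetween (depth a i + (-a i).toNat, depth a i + (a i).toNat + 1) (by omega) (by omega)
    exact ⟨k, hik, hkj, by rw [hk]; simp only [cellContent]; push_cast; omega⟩

lemma isContentVector_of_contentVecOf : IsContentVector a :=
  ⟨fun h => by rw [T.contentVecOf_iff.1 hT, T.box_zero h]; rfl,
    exists_lt_adjacent_of_pos hT, fun _ _ => exists_between_of_eq hT⟩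

end

variable {f : Fin n → ℕ × ℕ}

open Classical in
noncomputable def entryOfBox (f : Fin n → ℕ × ℕ) (c : ℕ × ℕ) : ℕ :=
  if h : ∃ m, f m = c then h.choose + 1 else 0

lemma entryOfBox_apply (hf : Injective f) (m : Fin n) : entryOfBox f (f m) = m + 1 := by
  have h : ∃ j, f j = f m := ⟨m, rfl⟩
  rw [entryOfBox, dif_pos h, hf h.choose_spec]

variable (hf : Injective f) (hlt : ∀ m p, p < f m → ∃ j < m, f j = p)
include hf hlt

lemma entryOfBox_lt_entryOfBox {p q : ℕ × ℕ} (hpq : p < q)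
    (hq : q ∈ Finset.univ.image f) : entryOfBox f p < entryOfBox f q := by
  obtain ⟨m, -, rfl⟩ := Finset.mem_image.1 hq
  obtain ⟨j, hjm, rfl⟩ := hlt m p hpq
  rw [entryOfBox_apply hf, entryOfBox_apply hf]
  exact Nat.add_lt_add_right hjm 1

noncomputable def ofBox : StdYIT Unit n where
  shape _ :=
    { cells := Finset.univ.image f
      isLowerSet := by
        intro p q hqp hp
        simp only [Finset.coe_image, Finset.coe_univ, Set.image_univ, Set.mem_range] at hp ⊢
        obtain ⟨m, rfl⟩ := hp
        rcases hqp.eq_or_lt with rfl | h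
        · exact ⟨m, rfl⟩
        · obtain ⟨j, -, hj⟩ := hlt m q h
          exact ⟨j, hj⟩ }
  entry _ := entryOfBox f
  total_card := by simp [Finset.card_image_of_injective _ hf]
  zero_outside _ c hc := dif_neg (by simpa using hc)
  mem_range _ c hc := by
    obtain ⟨m, -, rfl⟩ := Finset.mem_image.1 hc
    rw [entryOfBox_apply hf]
    exact succ_mem_Icc m
  unique_fill k hk := by
    have hk' := Finset.mem_Icc.1 hk
    refine ⟨((), f ⟨k - 1, by omega⟩),
      ⟨Finset.mem_image_of_mem _ (Finset.mem_univ _), ?_⟩, ?_⟩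
    · show entryOfBox f _ = k
      rw [entryOfBox_apply hf]
      dsimp only
      omega
    · rintro ⟨u, c⟩ ⟨hc, hck⟩
      obtain ⟨j, -, rfl⟩ := Finset.mem_image.1 (show c ∈ Finset.univ.image f from hc)
      dsimp only at hck
      rw [entryOfBox_apply hf] at hck
      rw [show j = ⟨k - 1, by omega⟩ from Fin.ext (by dsimp only; omega)]
  row_strict _ _ _ _ h _ hq :=
    entryOfBox_lt_entryOfBox hf hlt (Prod.mk_lt_mk.2 (Or.inr ⟨le_rfl, h⟩)) hq
  col_strict _ _ _ _ h _ hq :=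
    entryOfBox_lt_entryOfBox hf hlt (Prod.mk_lt_mk.2 (Or.inl ⟨h, le_rfl⟩)) hq

lemma box_ofBox : (ofBox hf hlt).box = f :=
  funext fun m => (eq_box_of_entry_eq _ (Finset.mem_image_of_mem _ (Finset.mem_univ m))
    (entryOfBox_apply hf m)).symm

end StdYIT

/-- Sending a standard Young tableau with `n` boxes to its content vector is
a bijection onto the set of content vectors of length `n`. -/
theorem content_vector_bijection (n : ℕ) :
    (∀ T : StdYIT Unit n, ∃! a : Fin n → ℤ, IsContentVector a ∧ ContentVecOf T a) ∧
    (∀ a : Fin n → ℤ, IsContentVector a → ∃! T : StdYIT Unit n, ContentVecOf T a) := by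
  refine ⟨fun T => ?_, fun a hA => ?_⟩
  · have hT : ContentVecOf T fun m => cellContent (T.box m) := T.contentVecOf_iff.2 fun _ => rfl
    exact ⟨_, ⟨StdYIT.isContentVector_of_contentVecOf hT, hT⟩,
      fun a ha => funext (T.contentVecOf_iff.1 ha.2)⟩
  · let T₀ := StdYIT.ofBox (cellOf_injective a) hA.exists_cellOf_eq_of_lt
    have hbox : T₀.box = cellOf a := StdYIT.box_ofBox _ _
    refine ⟨T₀, T₀.contentVecOf_iff.2 fun m => by rw [hbox, cellContent_cellOf],
      fun T hT => StdYIT.eq_of_box_eq ?_⟩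
    rw [hbox]
    exact funext (StdYIT.box_eq_cellOf hT)
end

section
/- For every 0 ≤ i ≤ n, the permutation representation of the symmetric group S_n on the complex vector space with basis the i-element subsets of {1,…,n} is multiplicity free, and the number of irreducible constituents in its decomposition equals min(i, n−i) + 1. -/
/-!
Orbits of `Sₙ` on pairs of `i`-subsets are classified by the size of the intersection, which is
symmetric in the pair, so any two `i`-subsets can be swapped by a permutation. An endomorphism of
the permutation module is an `Sₙ`-invariant matrix, hence symmetric, and two symmetric matrices
whose product is again symmetric commute (Gelfand's trick): the endomorphism algebra is
commutative. In a semisimple module this forces every irreducible to occur at most once, so the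
isotypic components are simple and, by Schur's lemma, their number is the dimension of the
endomorphism algebra, i.e. the number of orbits on pairs: one for each intersection size between
`max(0, 2i - n)` and `i`.
-/

/-- A module is multiplicity free if any two isomorphic simple submodules coincide
(for semisimple modules this says every irreducible occurs at most once). -/
def IsMultiplicityFree (R : Type*) [Ring R] (V : Type*) [AddCommGroup V] [Module R V] : Prop :=
  ∀ S T : Submodule R V, IsSimpleModule R S → IsSimpleModule R T →
    Nonempty (S ≃ₗ[R] T) → S = T

/-- The set of `i`-element subsets of `{1,…,n}`. -/
def JohnsonSet (n i : ℕ) : Type := {s : Finset (Fin n) // s.card = i}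

instance (n i : ℕ) : MulAction (Equiv.Perm (Fin n)) (JohnsonSet n i) where
  smul π s := ⟨s.1.image π, by rw [Finset.card_image_of_injective _ π.injective, s.2]⟩
  one_smul s := Subtype.ext (by
    show s.1.image ⇑(1 : Equiv.Perm (Fin n)) = s.1
    simp)
  mul_smul π σ s := Subtype.ext (by
    show s.1.image ⇑(π * σ) = (s.1.image ⇑σ).image ⇑π
    rw [Finset.image_image]; rfl)

/-- The permutation representation of `Sₙ` on the complex vector space with basis the
`i`-element subsets of `{1,…,n}`, as a module over the group algebra. -/
noncomputable def JohnsonModule (n i : ℕ) : Type :=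
  (Representation.ofMulAction ℂ (Equiv.Perm (Fin n)) (JohnsonSet n i)).asModule

noncomputable instance (n i : ℕ) : AddCommGroup (JohnsonModule n i) :=
  inferInstanceAs (AddCommGroup (Representation.ofMulAction ℂ (Equiv.Perm (Fin n)) (JohnsonSet n i)).asModule)

noncomputable instance (n i : ℕ) :
    Module (MonoidAlgebra ℂ (Equiv.Perm (Fin n))) (JohnsonModule n i) :=
  inferInstanceAs (Module (MonoidAlgebra ℂ (Equiv.Perm (Fin n)))
    (Representation.ofMulAction ℂ (Equiv.Perm (Fin n)) (JohnsonSet n i)).asModule)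

open Finset
open scoped MonoidAlgebra Matrix

namespace IsMultiplicityFree

variable {R V : Type*} [Ring R] [AddCommGroup V] [Module R V]

theorem of_commute [IsSemisimpleModule R V] (hcomm : ∀ f g : Module.End R V, Commute f g) :
    IsMultiplicityFree R V := by
  intro S T hS hT ⟨φ⟩
  by_contra hne
  have hST : Disjoint S T :=
    (isSimpleModule_iff_isAtom.1 hS).disjoint_of_ne (isSimpleModule_iff_isAtom.1 hT) hne
  obtain ⟨C, hC⟩ := exists_isCompl (S ⊔ T)
  have hSC : IsCompl S (T ⊔ C) :=
    ⟨hST.disjoint_sup_right_of_disjoint_sup_left hC.disjoint,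
      by rw [codisjoint_iff, ← sup_assoc, hC.codisjoint.eq_top]⟩
  -- with `p` the projection onto `S` along a complement containing `T` and `f = φ ∘ p`,
  -- `p * f = 0` but `f * p ≠ 0`
  let π := S.projectionOnto (T ⊔ C) hSC
  let p : Module.End R V := S.subtype ∘ₗ π
  let f : Module.End R V := T.subtype ∘ₗ φ.toLinearMap ∘ₗ π
  have hπT : ∀ t ∈ T, π t = 0 := fun t ht =>
    (S.projectionOnto_apply_eq_zero_iff hSC).2 (Submodule.mem_sup_left ht)
  have hpf : p * f = 0 := LinearMap.ext fun v => by
    show S.subtype (π (T.subtype (φ (π v)))) = 0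
    rw [Submodule.subtype_apply, Submodule.subtype_apply, hπT _ (φ (π v)).2, Submodule.coe_zero]
  have : Nontrivial S := IsSimpleModule.nontrivial R S
  obtain ⟨s, hs⟩ := exists_ne (0 : S)
  have hπs : π s = s := S.projectionOnto_apply_left hSC s
  have hfp : (f * p) s ≠ 0 := by
    show T.subtype (φ (π (S.subtype (π s)))) ≠ 0
    simpa [hπs] using hs
  exact hfp (by rw [← hcomm p f, hpf, LinearMap.zero_apply])

theorem isotypicComponent_eq (hmf : IsMultiplicityFree R V) (S : Submodule R V)
    [IsSimpleModule R S] : isotypicComponent R V S = S :=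
  le_antisymm (sSup_le fun _ ⟨e⟩ => (hmf _ S (.congr e) ‹_› ⟨e⟩).le) S.le_isotypicComponent

theorem isSimpleModule_of_mem_isotypicComponents (hmf : IsMultiplicityFree R V)
    {c : Submodule R V} (hc : c ∈ isotypicComponents R V) : IsSimpleModule R c := by
  obtain ⟨S, hS, rfl⟩ := hc
  rwa [hmf.isotypicComponent_eq S]

end IsMultiplicityFree

section AlgClosed

variable {k R V : Type*} [Field k] [IsAlgClosed k] [Ring R] [Algebra k R] [AddCommGroup V]
  [Module k V] [Module R V] [IsScalarTower k R V] [FiniteDimensional k V]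

theorem IsSimpleModule.finrank_end_eq_one [IsSimpleModule R V] :
    Module.finrank k (Module.End R V) = 1 :=
  (LinearEquiv.ofBijective (Algebra.linearMap k (Module.End R V))
    (IsSimpleModule.algebraMap_end_bijective_of_isAlgClosed k)).symm.finrank_eq.trans
    (Module.finrank_self k)

theorem IsMultiplicityFree.card_isotypicComponents (hmf : IsMultiplicityFree R V)
    [IsSemisimpleModule R V] :
    Nat.card (isotypicComponents R V) = Module.finrank k (Module.End R V) := by
  classical
  have : IsNoetherian R V := isNoetherian_of_tower k inferInstance
  have : Fintype (isotypicComponents R V) := Fintype.ofFinite _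
  have (c : isotypicComponents R V) : Module.Finite k c :=
    .of_injective (c.1.subtype.restrictScalars k) Subtype.val_injective
  have (c : isotypicComponents R V) : IsSimpleModule R c :=
    hmf.isSimpleModule_of_mem_isotypicComponents c.2
  rw [(IsSemisimpleModule.endAlgEquiv k R V).toLinearEquiv.finrank_eq,
    Module.finrank_pi_fintype]
  simp [IsSimpleModule.finrank_end_eq_one]

theorem IsMultiplicityFree.exists_simple_decomposition (hmf : IsMultiplicityFree R V)
    [IsSemisimpleModule R V] {m : ℕ} (hm : Module.finrank k (Module.End R V) = m) :
    ∃ W : Fin m → Submodule R V, iSupIndep W ∧ (⨆ j, W j) = ⊤ ∧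
      (∀ j, IsSimpleModule R (W j)) ∧ Pairwise fun j l => IsEmpty (W j ≃ₗ[R] W l) := by
  have : IsNoetherian R V := isNoetherian_of_tower k inferInstance
  let e : Fin m ≃ isotypicComponents R V :=
    (finCongr (hmf.card_isotypicComponents.trans hm).symm).trans (Finite.equivFin _).symm
  have hsimple (j : Fin m) : IsSimpleModule R (e j).1 :=
    hmf.isSimpleModule_of_mem_isotypicComponents (e j).2
  refine ⟨fun j => (e j).1, ?_, ?_, hsimple, fun j l hjl => ⟨fun φ => hjl ?_⟩⟩
  · exact ((sSupIndep_iff _).mp (sSupIndep_isotypicComponents R V)).comp e.injective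
  · rw [e.iSup_comp (g := Subtype.val), ← sSup_eq_iSup', sSup_isotypicComponents]
  · exact e.injective (Subtype.ext (hmf _ _ (hsimple j) (hsimple l) ⟨φ⟩))

end AlgClosed

namespace Representation

def invariantMatrices (k G X : Type*) [CommRing k] [Group G] [MulAction G X] :
    Submodule k (Matrix X X k) where
  carrier := {M | ∀ (g : G) x y, M (g • x) (g • y) = M x y}
  add_mem' hM hN g x y := by simp [hM g x y, hN g x y]
  zero_mem' _ _ _ := rfl
  smul_mem' c M hM g x y := by simp [hM g x y]

variable {k G X : Type*} [Group G] [MulAction G X]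

local notation "ρ" => ofMulAction k G X
local notation "β" => MonoidAlgebra.basis X k

section CommRing

variable [CommRing k]

theorem transpose_eq_of_mem_invariantMatrices (hswap : ∀ x y : X, ∃ g : G, g • x = y ∧ g • y = x)
    {M : Matrix X X k} (hM : M ∈ invariantMatrices k G X) : Mᵀ = M := by
  ext x y
  obtain ⟨g, hgx, hgy⟩ := hswap x y
  calc M y x = M (g • x) (g • y) := by rw [hgx, hgy]
    _ = M x y := hM g x y

theorem coeff_ofMulAction_smul (g : G) (v : k[X]) (x : X) :
    (ρ g v).coeff (g • x) = v.coeff x := by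
  rw [coeff_ofMulAction, inv_smul_smul]

variable [Fintype X] [DecidableEq X]

theorem toMatrix_mem_invariantMatrices (f : IntertwiningMap ρ ρ) :
    LinearMap.toMatrix β β f.toLinearMap ∈ invariantMatrices k G X := by
  intro g x y
  simp only [LinearMap.toMatrix_apply, MonoidAlgebra.basis_apply]
  rw [← ofMulAction_single, IntertwiningMap.toLinearMap_apply, f.isIntertwining]
  exact coeff_ofMulAction_smul g _ x

theorem toLin_isIntertwining {M : Matrix X X k} (hM : M ∈ invariantMatrices k G X) (g : G)
    (v : k[X]) : Matrix.toLin β β M (ρ g v) = ρ g (Matrix.toLin β β M v) := by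
  suffices Matrix.toLin β β M ∘ₗ ρ g = ρ g ∘ₗ Matrix.toLin β β M from LinearMap.congr_fun this v
  refine Module.Basis.ext β fun x => (β).repr.injective (Finsupp.ext fun z => ?_)
  have hentry (i j : X) : (β).repr (Matrix.toLin β β M (β j)) i = M i j := by
    rw [← LinearMap.toMatrix_apply, LinearMap.toMatrix_toLin]
  simp only [LinearMap.comp_apply, MonoidAlgebra.basis_apply, ofMulAction_single]
  rw [← MonoidAlgebra.basis_apply, hentry, ← hM g⁻¹, inv_smul_smul, ← MonoidAlgebra.basis_apply,
    ← hentry]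
  exact (coeff_ofMulAction g _ z).symm

variable (k G X) in
noncomputable def intertwiningMapEquivInvariantMatrices :
    IntertwiningMap ρ ρ ≃ₗ[k] invariantMatrices k G X where
  toFun f := ⟨LinearMap.toMatrix β β f.toLinearMap, toMatrix_mem_invariantMatrices f⟩
  invFun M := (Matrix.toLin β β M).intertwiningMap_of_isIntertwiningMap ρ ρ
    (toLin_isIntertwining M.2)
  map_add' f f' := by ext1; simp
  map_smul' c f := by ext1; simp
  left_inv f := by ext1; simp [LinearMap.intertwiningMap_of_isIntertwiningMap]
  right_inv M := by ext1; simp [LinearMap.intertwiningMap_of_isIntertwiningMap]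

theorem commute_end_ofMulAction_asModule (hswap : ∀ x y : X, ∃ g : G, g • x = y ∧ g • y = x)
    (f f' : Module.End k[G] (ρ).asModule) : Commute f f' := by
  let e := intertwiningMapEquivInvariantMatrices k G X
  have hsymm (F : IntertwiningMap ρ ρ) : (e F : Matrix X X k)ᵀ = e F :=
    transpose_eq_of_mem_invariantMatrices hswap (e F).2
  have hmul (F F' : IntertwiningMap ρ ρ) : (e (F * F') : Matrix X X k) = e F * e F' :=
    LinearMap.toMatrix_mul β _ _
  have hcomm (F F' : IntertwiningMap ρ ρ) : Commute F F' := by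
    refine e.injective (Subtype.ext ?_)
    calc (e (F * F') : Matrix X X k) = (e (F * F') : Matrix X X k)ᵀ := (hsymm _).symm
      _ = e (F' * F) := by rw [hmul, Matrix.transpose_mul, hsymm, hsymm, hmul]
  let E := IntertwiningMap.equivAlgEnd ρ
  simpa using (hcomm (E.symm f) (E.symm f')).map E

end CommRing

section Field

variable [Field k] [Fintype X]

theorem finrank_invariantMatrices {ι : Type*} {d : X × X → ι}
    (hd : ∀ p q : X × X, d p = d q ↔ ∃ g : G, g • p = q) :
    Module.finrank k (invariantMatrices k G X) = Nat.card (Set.range d) := by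
  classical
  have hinv (g : G) (x y : X) : d (g • x, g • y) = d (x, y) := (hd _ _).2 ⟨g⁻¹, by simp⟩
  let Ψ : (Set.range d → k) →ₗ[k] invariantMatrices k G X :=
    { toFun φ := ⟨fun x y => φ ⟨d (x, y), _, rfl⟩, fun g x y => by simp only [hinv]⟩
      map_add' _ _ := rfl
      map_smul' _ _ := rfl }
  have hΨ : Function.Bijective Ψ := by
    refine ⟨fun φ φ' h => funext fun ⟨_, p, hp⟩ => ?_, fun M => ?_⟩
    · subst hp
      exact congrFun (congrFun (congrArg Subtype.val h) p.1) p.2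
    · refine ⟨fun c => M.1 c.2.choose.1 c.2.choose.2, Subtype.ext (funext₂ fun x y => ?_)⟩
      obtain ⟨g, hg⟩ := (hd _ _).1 (Set.mem_range_self (f := d) (x, y)).choose_spec
      show M.1 _ _ = M.1 x y
      rw [← M.2 g, ← Prod.smul_fst, ← Prod.smul_snd, hg]
  rw [← (LinearEquiv.ofBijective Ψ hΨ).finrank_eq, Module.finrank_pi, Nat.card_eq_fintype_card]

theorem finrank_end_ofMulAction_asModule [DecidableEq X] {ι : Type*} {d : X × X → ι}
    (hd : ∀ p q : X × X, d p = d q ↔ ∃ g : G, g • p = q) :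
    Module.finrank k (Module.End k[G] (ρ).asModule) = Nat.card (Set.range d) :=
  ((IntertwiningMap.equivAlgEnd ρ).toLinearEquiv.symm ≪≫ₗ
    intertwiningMapEquivInvariantMatrices k G X).finrank_eq.trans (finrank_invariantMatrices hd)

theorem isMultiplicityFree_ofMulAction_asModule [Finite G] [NeZero (Nat.card G : k)]
    [DecidableEq X] (hswap : ∀ x y : X, ∃ g : G, g • x = y ∧ g • y = x) :
    IsMultiplicityFree k[G] (ρ).asModule :=
  .of_commute (commute_end_ofMulAction_asModule hswap)

end Field

end Representation

theorem Equiv.Perm.exists_comp_eq_of_card_fiber_eq {α β : Type*} [Fintype α] [DecidableEq β]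
    {f g : α → β} (h : ∀ b, Fintype.card {a // f a = b} = Fintype.card {a // g a = b}) :
    ∃ σ : Equiv.Perm α, g ∘ σ = f :=
  ⟨Equiv.ofFiberEquiv fun b => Fintype.equivOfCardEq (h b), funext (Equiv.ofFiberEquiv_map _)⟩

theorem Finset.exists_perm_image_eq_of_card_inter_eq {α : Type*} [Fintype α] [DecidableEq α]
    {s t s' t' : Finset α} (hs : #s = #s') (ht : #t = #t') (hst : #(s ∩ t) = #(s' ∩ t')) :
    ∃ σ : Equiv.Perm α, s.image σ = s' ∧ t.image σ = t' := by
  -- `σ` matches up the four regions of the Venn diagrams of `s, t` and of `s', t'`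
  let profile (u v : Finset α) (a : α) : Bool × Bool := (a ∈ u, a ∈ v)
  have hcard (u v : Finset α) (b : Bool × Bool) : Fintype.card {a // profile u v a = b} =
      match b with
      | (true, true) => #(u ∩ v)
      | (true, false) => #u - #(u ∩ v)
      | (false, true) => #v - #(u ∩ v)
      | (false, false) => Fintype.card α - #u - (#v - #(u ∩ v)) := by
    rw [Fintype.card_subtype]
    rcases b with ⟨_ | _, _ | _⟩ <;>
      simp [profile, Prod.ext_iff, filter_and, filter_not, ← compl_eq_univ_sdiff,
        ← sdiff_eq_inter_compl, card_compl, card_sdiff, inter_comm]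
  obtain ⟨σ, hσ⟩ := Equiv.Perm.exists_comp_eq_of_card_fiber_eq
    (f := profile s t) (g := profile s' t')
    fun b => by rcases b with ⟨_ | _, _ | _⟩ <;> simp only [hcard, hs, ht, hst]
  have hmem (a : α) : (σ a ∈ s' ↔ a ∈ s) ∧ (σ a ∈ t' ↔ a ∈ t) := by
    simpa [profile, Prod.ext_iff] using congrFun hσ a
  refine ⟨σ, ?_, ?_⟩ <;> ext b <;> rw [← σ.apply_symm_apply b, σ.injective.mem_finset_image]
  exacts [(hmem _).1.symm, (hmem _).2.symm]

namespace JohnsonSet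

variable {n i : ℕ}

instance : Fintype (JohnsonSet n i) := inferInstanceAs (Fintype {s : Finset (Fin n) // #s = i})

instance : DecidableEq (JohnsonSet n i) :=
  inferInstanceAs (DecidableEq {s : Finset (Fin n) // #s = i})

theorem val_smul (g : Equiv.Perm (Fin n)) (s : JohnsonSet n i) : (g • s).1 = s.1.image g := rfl

def interCard (p : JohnsonSet n i × JohnsonSet n i) : ℕ := #(p.1.1 ∩ p.2.1)

theorem interCard_eq_iff (p q : JohnsonSet n i × JohnsonSet n i) :
    interCard p = interCard q ↔ ∃ g : Equiv.Perm (Fin n), g • p = q := by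
  constructor
  · intro h
    obtain ⟨σ, h1, h2⟩ := Finset.exists_perm_image_eq_of_card_inter_eq
      (by rw [p.1.2, q.1.2]) (by rw [p.2.2, q.2.2]) h
    exact ⟨σ, Prod.ext (Subtype.ext h1) (Subtype.ext h2)⟩
  · rintro ⟨g, rfl⟩
    rw [interCard, interCard, Prod.smul_fst, Prod.smul_snd, val_smul, val_smul,
      ← image_inter _ _ g.injective, card_image_of_injective _ g.injective]

theorem interCard_mem_Icc (p : JohnsonSet n i × JohnsonSet n i) :
    interCard p ∈ Set.Icc (i - min i (n - i)) i := by
  obtain ⟨x, y⟩ := p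
  have hunion : #(x.1 ∪ y.1) + #(x.1 ∩ y.1) = i + i := by
    rw [card_union_add_card_inter, x.2, y.2]
  have hinter : #(x.1 ∩ y.1) ≤ i := (card_le_card inter_subset_left).trans x.2.le
  have hn : #(x.1 ∪ y.1) ≤ n := (card_le_univ _).trans (Fintype.card_fin n).le
  simp only [interCard, Set.mem_Icc]
  omega

theorem exists_interCard_eq (hi : i ≤ n) {c : ℕ} (hc : c ∈ Set.Icc (i - min i (n - i)) i) :
    ∃ p : JohnsonSet n i × JohnsonSet n i, interCard p = c := by
  obtain ⟨hlo, hhi⟩ := hc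
  let interval (a b : ℕ) (hb : b ≤ n) : Finset (Fin n) :=
    (Ico a b).attachFin fun _ hm => (mem_Ico.1 hm).2.trans_le hb
  have hcard (a b : ℕ) (hb : b ≤ n) : #(interval a b hb) = b - a := by
    simp [interval]
  have hb : i + i - c ≤ n := by omega
  let x : JohnsonSet n i := ⟨interval 0 i hi, by simp [hcard]⟩
  let y : JohnsonSet n i := ⟨interval (i - c) (i + i - c) hb, by rw [hcard _ _ hb]; omega⟩
  have hxy : x.1 ∩ y.1 = interval (i - c) i hi := by
    ext a
    simp only [x, y, interval, mem_inter, mem_attachFin, mem_Ico]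
    omega
  refine ⟨(x, y), ?_⟩
  simp only [interCard, hxy, hcard]
  omega

theorem range_interCard (hi : i ≤ n) :
    Set.range (interCard (n := n) (i := i)) = Set.Icc (i - min i (n - i)) i :=
  (Set.range_subset_iff.2 interCard_mem_Icc).antisymm fun _ hc => exists_interCard_eq hi hc

theorem exists_smul_swap (x y : JohnsonSet n i) :
    ∃ g : Equiv.Perm (Fin n), g • x = y ∧ g • y = x := by
  obtain ⟨g, hg⟩ := (interCard_eq_iff (x, y) (y, x)).1 (by simp only [interCard, inter_comm])
  exact ⟨g, congrArg Prod.fst hg, congrArg Prod.snd hg⟩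

theorem finrank_end {k : Type*} [Field k] (hi : i ≤ n) :
    Module.finrank k (Module.End k[Equiv.Perm (Fin n)]
      (Representation.ofMulAction k (Equiv.Perm (Fin n)) (JohnsonSet n i)).asModule) =
      min i (n - i) + 1 := by
  rw [Representation.finrank_end_ofMulAction_asModule interCard_eq_iff, range_interCard hi,
    Nat.card_coe_set_eq, Set.ncard_Icc_nat]
  omega

end JohnsonSet

/-- The permutation representation of `Sₙ` on the `i`-element subsets of
`{1,…,n}` is multiplicity free, with exactly `min(i, n-i) + 1` irreducible constituents. -/
theorem johnson_scheme_multiplicity_free (n i : ℕ) (hi : i ≤ n) :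
    IsMultiplicityFree (MonoidAlgebra ℂ (Equiv.Perm (Fin n))) (JohnsonModule n i) ∧
    ∃ W : Fin (min i (n - i) + 1) →
        Submodule (MonoidAlgebra ℂ (Equiv.Perm (Fin n))) (JohnsonModule n i),
      iSupIndep W ∧ (⨆ k, W k) = ⊤ ∧
      (∀ k, IsSimpleModule (MonoidAlgebra ℂ (Equiv.Perm (Fin n))) (W k)) ∧
      Pairwise fun k l =>
        IsEmpty ((W k) ≃ₗ[MonoidAlgebra ℂ (Equiv.Perm (Fin n))] (W l)) := by
  have hmf : IsMultiplicityFree (MonoidAlgebra ℂ (Equiv.Perm (Fin n)))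
      (Representation.ofMulAction ℂ (Equiv.Perm (Fin n)) (JohnsonSet n i)).asModule :=
    Representation.isMultiplicityFree_ofMulAction_asModule JohnsonSet.exists_smul_swap
  exact ⟨hmf, hmf.exists_simple_decomposition (JohnsonSet.finrank_end hi)⟩
end

section
/- Let V(B(n)) be the complex vector space with basis all subsets of {1,…,n}, graded by cardinality, and let U be the up operator. Then there exists a symmetric Jordan basis of V(B(n)); moreover, for every 0 ≤ k ≤ n/2, the number of symmetric Jordan chains in this basis starting at rank k and ending at rank n−k equals C(n,k) − C(n,k−1), the number of standard Young tableaux of shape (n−k,k). -/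
/-- The up operator on `V(B(n))`, the complex vector space of functions on subsets of
`{1,…,n}` (with subsets as standard basis): `U(X) = Σ_{Y ⊇ X, |Y| = |X|+1} Y`; in terms of
coordinates, `(U v)(Y) = Σ_{X ⊆ Y, |X|+1 = |Y|} v(X)`. -/
noncomputable def upOp (n : ℕ) : (Finset (Fin n) → ℂ) →ₗ[ℂ] (Finset (Fin n) → ℂ) where
  toFun v Y := ∑ X ∈ Finset.univ.filter (fun X => X ⊆ Y ∧ X.card + 1 = Y.card), v X
  map_add' u v := by funext Y; simp [Finset.sum_add_distrib]
  map_smul' c v := by funext Y; simp [Finset.mul_sum]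

/-- A symmetric Jordan chain in `V(B(n))`: a sequence `v₀, …, v_{len-1}` of nonzero homogeneous
vectors (of ranks `start, start+1, …`), each mapped to the next by the up operator, with
`U(v_{len-1}) = 0`, and with starting and ending ranks summing to `n`. -/
structure SJC (n : ℕ) where
  len : ℕ
  len_pos : 0 < len
  start : ℕ
  v : Fin len → (Finset (Fin n) → ℂ)
  nonzero : ∀ j, v j ≠ 0
  homog : ∀ (j : Fin len) (X : Finset (Fin n)), X.card ≠ start + (j : ℕ) → v j X = 0
  chain : ∀ (j : ℕ) (hj : j + 1 < len), upOp n (v ⟨j, by omega⟩) = v ⟨j + 1, hj⟩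
  chain_top : upOp n (v ⟨len - 1, by omega⟩) = 0
  symmetric : start + (start + (len - 1)) = n


/-!
Induction on `n`, through `V(B(n+1)) = V(B(n)) ⊗ V(B(1))` (split the subsets of `Fin (n+1)` by
whether they contain `0`). A chain `x₀, …, x_{h-1}` of `V(B(n))` gives two chains of `V(B(n+1))`,
of lengths `h + 1` and `h - 1`, again symmetric (the Clebsch–Gordan rule for `sl₂`), whose
span contains both copies of every `x_j`. So the new chains span `V(B(n+1))` with `2 · 2ⁿ`
vectors, hence form a basis.

The chain counts hold for every symmetric Jordan basis: for `k ≤ n / 2`, the basis vectors of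
rank `k` are one for each chain starting at a rank `≤ k`, and they form a basis of the rank-`k`
part, which has dimension `C(n,k)`.
-/

open Finset Module Submodule

local notation "V" n:max => Finset (Fin n) → ℂ

lemma Finset.filter_subset_card_add_one_eq_image_erase {α : Type*} [DecidableEq α] [Fintype α]
    (Y : Finset α) :
    univ.filter (fun X : Finset α => X ⊆ Y ∧ X.card + 1 = Y.card) = Y.image Y.erase := by
  ext X
  simp only [mem_filter, mem_univ, true_and, mem_image]
  constructor
  · rintro ⟨hXY, hcard⟩
    refine (covBy_iff_card_sdiff_eq_one.2 ⟨hXY, ?_⟩).exists_finset_erase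
    rw [card_sdiff_of_subset hXY]
    omega
  · rintro ⟨y, hy, rfl⟩
    exact ⟨erase_subset _ _, card_erase_add_one hy⟩

lemma Finset.zero_notMem_map_succEmb {n : ℕ} (X : Finset (Fin n)) :
    (0 : Fin (n + 1)) ∉ X.map (Fin.succEmb n) := by
  simp [Fin.succ_ne_zero]

theorem Finset.fin_succ_cases {n : ℕ} {P : Finset (Fin (n + 1)) → Prop}
    (zero_notMem : ∀ X : Finset (Fin n), P (X.map (Fin.succEmb n)))
    (zero_mem : ∀ X : Finset (Fin n), P (insert 0 (X.map (Fin.succEmb n))))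
    (Y : Finset (Fin (n + 1))) : P Y := by
  have hX : (univ.filter (·.succ ∈ Y)).map (Fin.succEmb n) = Y.erase 0 := by
    ext y
    cases y using Fin.cases <;> simp [Fin.succ_ne_zero]
  by_cases h : 0 ∈ Y
  · simpa [hX, insert_erase h] using zero_mem (univ.filter (·.succ ∈ Y))
  · simpa [hX, erase_eq_of_notMem h] using zero_notMem (univ.filter (·.succ ∈ Y))

variable {n : ℕ}

lemma funext_fin_succ {β : Type*} {f g : Finset (Fin (n + 1)) → β}
    (zero_notMem : ∀ X : Finset (Fin n), f (X.map (Fin.succEmb n)) = g (X.map (Fin.succEmb n)))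
    (zero_mem : ∀ X : Finset (Fin n),
      f (insert 0 (X.map (Fin.succEmb n))) = g (insert 0 (X.map (Fin.succEmb n)))) :
    f = g :=
  funext (fin_succ_cases zero_notMem zero_mem)

lemma upOp_apply_eq_sum_erase (v : V n) (Y : Finset (Fin n)) :
    upOp n v Y = ∑ y ∈ Y, v (Y.erase y) := by
  rw [upOp, LinearMap.coe_mk, AddHom.coe_mk, filter_subset_card_add_one_eq_image_erase,
    sum_image Y.erase_injOn]

lemma upOp_apply_map_succEmb (v : V (n + 1)) (X : Finset (Fin n)) :
    upOp (n + 1) v (X.map (Fin.succEmb n)) = ∑ x ∈ X, v ((X.erase x).map (Fin.succEmb n)) := by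
  simp [upOp_apply_eq_sum_erase, map_erase]

lemma upOp_apply_insert_zero (v : V (n + 1)) (X : Finset (Fin n)) :
    upOp (n + 1) v (insert 0 (X.map (Fin.succEmb n))) =
      v (X.map (Fin.succEmb n)) + ∑ x ∈ X, v (insert 0 ((X.erase x).map (Fin.succEmb n))) := by
  rw [upOp_apply_eq_sum_erase, sum_insert (zero_notMem_map_succEmb X),
    erase_insert (zero_notMem_map_succEmb X), sum_map]
  simp [erase_insert_of_ne, (Fin.succ_ne_zero _).symm, map_erase]

/-- `V(B(n+1)) = embed₀ V(B(n)) ⊕ embed₁ V(B(n))`, splitting the subsets of `Fin (n + 1)` by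
whether they avoid or contain `0`. -/
noncomputable def embed₀ : V n →ₗ[ℂ] V (n + 1) where
  toFun a Y := if 0 ∈ Y then 0 else a (univ.filter (·.succ ∈ Y))
  map_add' a b := by funext Y; split_ifs <;> simp [*]
  map_smul' c a := by funext Y; split_ifs <;> simp [*]

noncomputable def embed₁ : V n →ₗ[ℂ] V (n + 1) where
  toFun b Y := if 0 ∈ Y then b (univ.filter (·.succ ∈ Y)) else 0
  map_add' a b := by funext Y; split_ifs <;> simp [*]
  map_smul' c a := by funext Y; split_ifs <;> simp [*]

@[simp] lemma embed₀_apply_map (a : V n) (X : Finset (Fin n)) :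
    embed₀ a (X.map (Fin.succEmb n)) = a X := by
  simp [embed₀, Fin.succ_ne_zero]

@[simp] lemma embed₀_apply_insert_zero (a : V n) (X : Finset (Fin n)) :
    embed₀ a (insert 0 (X.map (Fin.succEmb n))) = 0 := by
  simp [embed₀]

@[simp] lemma embed₁_apply_map (b : V n) (X : Finset (Fin n)) :
    embed₁ b (X.map (Fin.succEmb n)) = 0 := by
  simp [embed₁, Fin.succ_ne_zero]

@[simp] lemma embed₁_apply_insert_zero (b : V n) (X : Finset (Fin n)) :
    embed₁ b (insert 0 (X.map (Fin.succEmb n))) = b X := by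
  simp [embed₁, Fin.succ_ne_zero]

lemma embed₀_add_embed₁_eq_self (v : V (n + 1)) :
    embed₀ (fun X => v (X.map (Fin.succEmb n))) +
      embed₁ (fun X => v (insert 0 (X.map (Fin.succEmb n)))) = v :=
  funext_fin_succ (by simp) (by simp)

lemma embed₀_add_embed₁_eq_zero_iff {a b : V n} :
    embed₀ a + embed₁ b = 0 ↔ a = 0 ∧ b = 0 := by
  refine ⟨fun h => ⟨funext fun X => ?_, funext fun X => ?_⟩,
    fun ⟨ha, hb⟩ => by simp [ha, hb]⟩
  · simpa using congrFun h (X.map (Fin.succEmb n))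
  · simpa using congrFun h (insert 0 (X.map (Fin.succEmb n)))

lemma upOp_embed₀ (a : V n) : upOp (n + 1) (embed₀ a) = embed₀ (upOp n a) + embed₁ a := by
  refine funext_fin_succ (fun X => ?_) (fun X => ?_)
  · rw [upOp_apply_map_succEmb]
    simp only [Pi.add_apply, embed₀_apply_map, embed₁_apply_map, upOp_apply_eq_sum_erase,
      add_zero]
  · rw [upOp_apply_insert_zero]
    simp only [Pi.add_apply, embed₀_apply_map, embed₀_apply_insert_zero,
      embed₁_apply_insert_zero, sum_const_zero, add_zero, zero_add]

lemma upOp_embed₁ (b : V n) : upOp (n + 1) (embed₁ b) = embed₁ (upOp n b) := by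
  refine funext_fin_succ (fun X => ?_) (fun X => ?_)
  · rw [upOp_apply_map_succEmb]
    simp only [embed₁_apply_map, sum_const_zero]
  · rw [upOp_apply_insert_zero]
    simp only [embed₁_apply_map, embed₁_apply_insert_zero, upOp_apply_eq_sum_erase, zero_add]

lemma upOp_embed₀_add_smul_embed₁ (a b : V n) (α : ℂ) :
    upOp (n + 1) (embed₀ a + α • embed₁ b) = embed₀ (upOp n a) + embed₁ (a + α • upOp n b) := by
  rw [map_add, map_smul, upOp_embed₀, upOp_embed₁, map_add, map_smul, add_assoc]

def homogeneous (n r : ℕ) : Submodule ℂ (V n) where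
  carrier := {v | ∀ X : Finset (Fin n), X.card ≠ r → v X = 0}
  add_mem' ha hb X hX := by simp [ha X hX, hb X hX]
  zero_mem' _ _ := rfl
  smul_mem' c v hv X hX := by simp [hv X hX]

lemma embed₀_mem_homogeneous {r : ℕ} {a : V n} (ha : a ∈ homogeneous n r) :
    embed₀ a ∈ homogeneous (n + 1) r := by
  refine fin_succ_cases (P := fun Y => Y.card ≠ r → embed₀ a Y = 0) (fun X hX => ?_)
    (fun X _ => embed₀_apply_insert_zero a X)
  rw [embed₀_apply_map]
  exact ha X (by simpa using hX)

lemma embed₁_mem_homogeneous {r : ℕ} {b : V n} (hb : b ∈ homogeneous n r) :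
    embed₁ b ∈ homogeneous (n + 1) (r + 1) := by
  refine fin_succ_cases (P := fun Y => Y.card ≠ r + 1 → embed₁ b Y = 0)
    (fun X _ => embed₁_apply_map b X) (fun X hX => ?_)
  rw [embed₁_apply_insert_zero]
  exact hb X (by simpa [card_insert_of_notMem (zero_notMem_map_succEmb X)] using hX)

namespace SJC

variable (c : SJC n)

lemma two_mul_start_add_len : 2 * c.start + c.len = n + 1 := by
  have := c.symmetric
  have := c.len_pos
  omega

noncomputable def seq (j : ℕ) : V n := if h : j < c.len then c.v ⟨j, h⟩ else 0

lemma seq_of_lt {j : ℕ} (h : j < c.len) : c.seq j = c.v ⟨j, h⟩ := dif_pos h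

lemma seq_of_le {j : ℕ} (h : c.len ≤ j) : c.seq j = 0 := dif_neg (by omega)

lemma seq_ne_zero {j : ℕ} (h : j < c.len) : c.seq j ≠ 0 := by
  rw [c.seq_of_lt h]
  exact c.nonzero _

lemma seq_mem_homogeneous (j : ℕ) : c.seq j ∈ homogeneous n (c.start + j) := by
  unfold seq
  split_ifs with h
  · exact c.homog ⟨j, h⟩
  · exact zero_mem _

lemma upOp_seq (j : ℕ) : upOp n (c.seq j) = c.seq (j + 1) := by
  rcases lt_trichotomy (j + 1) c.len with h | h | h
  · rw [c.seq_of_lt (by omega), c.seq_of_lt h]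
    exact c.chain j h
  · obtain rfl : j = c.len - 1 := by omega
    rw [c.seq_of_lt (by omega), c.seq_of_le h.ge]
    exact c.chain_top
  · rw [c.seq_of_le (by omega), c.seq_of_le (by omega), map_zero]

noncomputable def ofSeq (x : ℕ → V n) (len start : ℕ) (len_pos : 0 < len)
    (symmetric : 2 * start + len = n + 1) (nonzero : ∀ j < len, x j ≠ 0)
    (homog : ∀ j, x j ∈ homogeneous n (start + j)) (up : ∀ j, upOp n (x j) = x (j + 1))
    (top : x len = 0) : SJC n where
  len := len
  len_pos := len_pos
  start := start
  v j := x j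
  nonzero j := nonzero j j.isLt
  homog j := homog j
  chain j _ := up j
  chain_top := by rw [up, Nat.sub_add_cancel len_pos, top]
  symmetric := by omega

/-- The chain of `V(B(n+1))` one step longer than `c`. At `j = 0` the truncated `j - 1` does no
harm, because of the factor `j`. -/
noncomputable def longSeq (j : ℕ) : V (n + 1) :=
  embed₀ (c.seq j) + (j : ℂ) • embed₁ (c.seq (j - 1))

/-- The chain of `V(B(n+1))` one step shorter than `c`: the coefficient makes it die at
`j = len - 1`. -/
noncomputable def shortSeq (j : ℕ) : V (n + 1) :=
  embed₀ (c.seq (j + 1)) + ((j + 1 : ℂ) - c.len) • embed₁ (c.seq j)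

lemma upOp_longSeq (j : ℕ) : upOp (n + 1) (c.longSeq j) = c.longSeq (j + 1) := by
  rw [longSeq, upOp_embed₀_add_smul_embed₁, c.upOp_seq, longSeq, Nat.add_sub_cancel]
  congr 1
  rcases j with _ | j
  · simp
  · rw [Nat.add_sub_cancel, c.upOp_seq, map_add, map_smul]
    push_cast
    module

lemma upOp_shortSeq (j : ℕ) : upOp (n + 1) (c.shortSeq j) = c.shortSeq (j + 1) := by
  rw [shortSeq, upOp_embed₀_add_smul_embed₁, c.upOp_seq, c.upOp_seq, shortSeq, map_add,
    map_smul]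
  push_cast
  module

lemma longSeq_eq_zero {j : ℕ} (h : c.len < j) : c.longSeq j = 0 := by
  simp [longSeq, c.seq_of_le h.le, c.seq_of_le (Nat.le_sub_one_of_lt h)]

lemma shortSeq_eq_zero {j : ℕ} (h : c.len ≤ j + 1) : c.shortSeq j = 0 := by
  rcases h.eq_or_lt with h | h
  · simp [shortSeq, h, c.seq_of_le h.le]
  · simp [shortSeq, c.seq_of_le h.le, c.seq_of_le (Nat.le_of_lt_succ h)]

lemma longSeq_ne_zero {j : ℕ} (h : j < c.len + 1) : c.longSeq j ≠ 0 := by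
  rw [longSeq, ← map_smul, Ne, embed₀_add_embed₁_eq_zero_iff, not_and_or]
  rcases Nat.lt_succ_iff_lt_or_eq.1 h with h | rfl
  · exact Or.inl (c.seq_ne_zero h)
  · exact Or.inr <|
      smul_ne_zero (by exact_mod_cast c.len_pos.ne')
        (c.seq_ne_zero (Nat.sub_one_lt c.len_pos.ne'))

lemma shortSeq_ne_zero {j : ℕ} (h : j < c.len - 1) : c.shortSeq j ≠ 0 := by
  rw [shortSeq, ← map_smul, Ne, embed₀_add_embed₁_eq_zero_iff, not_and_or]
  exact Or.inl (c.seq_ne_zero (by omega))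

lemma longSeq_mem_homogeneous (j : ℕ) : c.longSeq j ∈ homogeneous (n + 1) (c.start + j) := by
  refine add_mem (embed₀_mem_homogeneous (c.seq_mem_homogeneous j)) ?_
  rcases j with _ | j
  · simp
  · exact smul_mem _ _ (embed₁_mem_homogeneous (c.seq_mem_homogeneous j))

lemma shortSeq_mem_homogeneous (j : ℕ) :
    c.shortSeq j ∈ homogeneous (n + 1) (c.start + 1 + j) := by
  refine add_mem ?_ (smul_mem _ _ ?_)
  · convert embed₀_mem_homogeneous (c.seq_mem_homogeneous (j + 1)) using 2
    omega
  · convert embed₁_mem_homogeneous (c.seq_mem_homogeneous j) using 2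
    omega

noncomputable def long : SJC (n + 1) :=
  ofSeq c.longSeq (c.len + 1) c.start (by omega) (by have := c.two_mul_start_add_len; omega)
    (fun _ => c.longSeq_ne_zero) c.longSeq_mem_homogeneous c.upOp_longSeq
    (c.longSeq_eq_zero (Nat.lt_succ_self _))

noncomputable def short (h : 2 ≤ c.len) : SJC (n + 1) :=
  ofSeq c.shortSeq (c.len - 1) (c.start + 1) (by omega)
    (by have := c.two_mul_start_add_len; omega) (fun _ => c.shortSeq_ne_zero)
    c.shortSeq_mem_homogeneous c.upOp_shortSeq (c.shortSeq_eq_zero (by omega))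

lemma longSeq_succ_sub_shortSeq (j : ℕ) :
    c.longSeq (j + 1) - c.shortSeq j = (c.len : ℂ) • embed₁ (c.seq j) := by
  simp only [longSeq, shortSeq, Nat.add_sub_cancel]
  push_cast
  module

lemma embed₀_seq_mem_and_embed₁_seq_mem {S : Submodule ℂ (V (n + 1))}
    (hlong : ∀ j, c.longSeq j ∈ S) (hshort : ∀ j, c.shortSeq j ∈ S) (j : ℕ) :
    embed₀ (c.seq j) ∈ S ∧ embed₁ (c.seq j) ∈ S := by
  have h₁ (i : ℕ) : embed₁ (c.seq i) ∈ S := by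
    have hlen : (c.len : ℂ) ≠ 0 := by exact_mod_cast c.len_pos.ne'
    rw [← inv_smul_smul₀ hlen (embed₁ (c.seq i)), ← c.longSeq_succ_sub_shortSeq]
    exact smul_mem _ _ (sub_mem (hlong _) (hshort _))
  have h₀ : embed₀ (c.seq j) = c.longSeq j - (j : ℂ) • embed₁ (c.seq (j - 1)) := by
    rw [longSeq, add_sub_cancel_right]
  exact ⟨h₀ ▸ sub_mem (hlong j) (smul_mem _ _ (h₁ _)), h₁ j⟩

def vectors {ι : Type*} (c : ι → SJC n) (p : (t : ι) × Fin (c t).len) : V n := (c p.1).v p.2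

section Family

variable {ι : Type*} (c : ι → SJC n)

noncomputable def succFamily : ι ⊕ {t // 2 ≤ (c t).len} → SJC (n + 1) :=
  Sum.elim (fun t => (c t).long) (fun t => (c t.1).short t.2)

theorem top_le_span_vectors_succFamily (hspan : ⊤ ≤ span ℂ (Set.range (vectors c))) :
    ⊤ ≤ span ℂ (Set.range (vectors (succFamily c))) := by
  set S := span ℂ (Set.range (vectors (succFamily c)))
  have hlong (t : ι) (j : ℕ) : (c t).longSeq j ∈ S := by
    rcases lt_or_ge (c t).len j with h | h
    · simp [(c t).longSeq_eq_zero h]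
    · exact subset_span ⟨⟨Sum.inl t, ⟨j, Nat.lt_succ_of_le h⟩⟩, rfl⟩
  have hshort (t : ι) (j : ℕ) : (c t).shortSeq j ∈ S := by
    rcases le_or_gt (c t).len (j + 1) with h | h
    · simp [(c t).shortSeq_eq_zero h]
    · exact subset_span
        ⟨⟨Sum.inr ⟨t, by omega⟩, ⟨j, show j < (c t).len - 1 by omega⟩⟩, rfl⟩
  have hmem (t : ι) (j : Fin (c t).len) :
      embed₀ ((c t).v j) ∈ S ∧ embed₁ ((c t).v j) ∈ S := by
    rw [← (c t).seq_of_lt j.isLt]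
    exact (c t).embed₀_seq_mem_and_embed₁_seq_mem (hlong t) (hshort t) j
  have hembed (a : V n) : embed₀ a ∈ S ∧ embed₁ a ∈ S := by
    have ha : a ∈ span ℂ (Set.range (vectors c)) := hspan mem_top
    constructor <;> refine (span_le.2 ?_ : _ ≤ S.comap _) ha <;> rintro _ ⟨⟨t, j⟩, rfl⟩
    exacts [(hmem t j).1, (hmem t j).2]
  intro v _
  rw [← embed₀_add_embed₁_eq_self v]
  exact add_mem (hembed _).1 (hembed _).2

theorem sum_len_succFamily [Fintype ι] :
    ∑ t, (succFamily c t).len = 2 * ∑ t, (c t).len := by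
  have hshort : ∑ t : {t // 2 ≤ (c t).len}, ((c t.1).len - 1) = ∑ t, ((c t).len - 1) := by
    rw [← sum_subtype (univ.filter fun t => 2 ≤ (c t).len) (by simp) (fun t => (c t).len - 1),
      sum_filter]
    exact sum_congr rfl fun t _ => by split_ifs <;> omega
  have hlen (t : ι) : (c t).len + 1 + ((c t).len - 1) = 2 * (c t).len := by
    have := (c t).len_pos
    omega
  simp only [succFamily, Fintype.sum_sum_type, Sum.elim_inl, Sum.elim_inr, long, short, ofSeq]
  rw [hshort, ← sum_add_distrib, sum_congr rfl fun t _ => hlen t, mul_sum]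

end Family

noncomputable def emptySet : SJC 0 where
  len := 1
  len_pos := one_pos
  start := 0
  v _ _ := 1
  nonzero _ h := one_ne_zero (congrFun h ∅)
  homog _ X hX := absurd (by simp [eq_empty_of_isEmpty X]) hX
  chain _ hj := absurd hj (by omega)
  chain_top := by
    funext Y
    simp [upOp_apply_eq_sum_erase, eq_empty_of_isEmpty Y]
  symmetric := rfl

theorem exists_spanning_family (n : ℕ) :
    ∃ (ι : Type) (_ : Fintype ι) (c : ι → SJC n),
      ⊤ ≤ span ℂ (Set.range (vectors c)) ∧ ∑ t, (c t).len = 2 ^ n := by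
  induction n with
  | zero =>
    refine ⟨Unit, inferInstance, fun _ => emptySet, fun v _ => ?_, rfl⟩
    have hv : v = v ∅ • vectors (fun _ => emptySet) ⟨(), ⟨0, one_pos⟩⟩ := by
      funext X
      simp [vectors, emptySet, eq_empty_of_isEmpty X]
    exact hv ▸ smul_mem _ _ (subset_span ⟨_, rfl⟩)
  | succ n ih =>
    obtain ⟨ι, _, c, hspan, hlen⟩ := ih
    refine ⟨_, inferInstance, succFamily c, top_le_span_vectors_succFamily c hspan, ?_⟩
    rw [sum_len_succFamily, hlen, pow_succ, mul_comm]

end SJC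

theorem Module.Basis.finrank_range_eq_card {K W ι : Type*} [Field K] [AddCommGroup W]
    [Module K W] (b : Basis ι K W) (P : W →ₗ[K] W) (s : Finset ι)
    (hs : ∀ i ∈ s, P (b i) = b i) (hsc : ∀ i ∉ s, P (b i) = 0) :
    finrank K (LinearMap.range P) = s.card := by
  have hrange : LinearMap.range P = span K (Set.range (b ∘ ((↑) : s → ι))) := by
    rw [LinearMap.range_eq_map, ← b.span_eq, map_span, ← Set.range_comp]
    apply span_eq_span
    · rintro _ ⟨i, rfl⟩
      by_cases hi : i ∈ s
      · exact subset_span ⟨⟨i, hi⟩, (hs i hi).symm⟩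
      · simp [hsc i hi]
    · rintro _ ⟨i, rfl⟩
      exact subset_span ⟨i, hs i i.2⟩
  rw [hrange, finrank_span_eq_card (b.linearIndependent.comp _ Subtype.val_injective),
    Fintype.card_coe]

noncomputable def rankProj (n k : ℕ) : V n →ₗ[ℂ] V n where
  toFun v Y := if Y.card = k then v Y else 0
  map_add' u v := by funext Y; split_ifs <;> simp [*]
  map_smul' c v := by funext Y; split_ifs <;> simp [*]

lemma rankProj_of_mem_homogeneous {k : ℕ} {v : V n} (hv : v ∈ homogeneous n k) :
    rankProj n k v = v := by
  funext Y
  by_cases hY : Y.card = k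
  · simp [rankProj, hY]
  · simp [rankProj, hY, hv Y hY]

lemma rankProj_of_mem_homogeneous_of_ne {r k : ℕ} {v : V n} (hv : v ∈ homogeneous n r)
    (hrk : r ≠ k) : rankProj n k v = 0 := by
  funext Y
  by_cases hY : Y.card = k
  · simp [rankProj, hY, hv Y (hY ▸ hrk.symm)]
  · simp [rankProj, hY]

lemma finrank_range_rankProj {ι : Type*} [Fintype ι] (b : Basis ι ℂ (V n)) (r : ι → ℕ)
    (hb : ∀ i, b i ∈ homogeneous n (r i)) (k : ℕ) :
    finrank ℂ (LinearMap.range (rankProj n k)) = #{i | r i = k} :=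
  b.finrank_range_eq_card _ _
    (fun i hi => rankProj_of_mem_homogeneous ((mem_filter.1 hi).2 ▸ hb i))
    (fun i hi => rankProj_of_mem_homogeneous_of_ne (hb i) (by simpa using hi))

theorem card_filter_rank_eq_choose {ι : Type*} [Fintype ι] (b : Basis ι ℂ (V n))
    (r : ι → ℕ) (hb : ∀ i, b i ∈ homogeneous n (r i)) (k : ℕ) :
    #{i | r i = k} = n.choose k := by
  have hstd (Y : Finset (Fin n)) : Pi.basisFun ℂ _ Y ∈ homogeneous n Y.card :=
    fun X hX => by simp [show X ≠ Y by rintro rfl; exact hX rfl]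
  have hslice : ({Y | Y.card = k} : Finset (Finset (Fin n))) = powersetCard k univ := by
    ext
    simp
  rw [← finrank_range_rankProj b r hb, finrank_range_rankProj _ _ hstd, hslice,
    card_powersetCard, card_univ, Fintype.card_fin]

namespace SJC

variable {ι : Type*} [Fintype ι] (c : ι → SJC n)

/-- A chain starting at rank `start ≤ k ≤ n / 2` passes through rank `k` exactly once. -/
lemma card_filter_start_le_eq_card_filter_rank {k : ℕ} (hk : 2 * k ≤ n) :
    #{t | (c t).start ≤ k} = #{p : (t : ι) × Fin (c t).len | (c p.1).start + p.2 = k} := by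
  refine card_bij (fun t ht => ⟨t, ⟨k - (c t).start, ?_⟩⟩) (fun t ht => ?_)
    (fun t _ t' _ h => (Sigma.mk.inj_iff.1 h).1) (fun p hp => ?_)
  · have := (c t).two_mul_start_add_len
    have := (mem_filter.1 ht).2
    omega
  · simp only [mem_filter, mem_univ, true_and]
    have := (mem_filter.1 ht).2
    omega
  · obtain ⟨t, j⟩ := p
    have hj : (c t).start + j = k := (mem_filter.1 hp).2
    refine ⟨t, mem_filter.2 ⟨mem_univ _, by omega⟩, ?_⟩
    simp only [Sigma.mk.inj_iff, heq_eq_eq, true_and]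
    ext
    exact Nat.sub_eq_of_eq_add' hj.symm

theorem card_filter_start_le (B : Basis ((t : ι) × Fin (c t).len) ℂ (V n))
    (hB : ∀ t j, B ⟨t, j⟩ = (c t).v j) {k : ℕ} (hk : 2 * k ≤ n) :
    #{t | (c t).start ≤ k} = n.choose k := by
  rw [card_filter_start_le_eq_card_filter_rank c hk]
  exact card_filter_rank_eq_choose B _ (fun p => hB p.1 p.2 ▸ (c p.1).homog p.2) k

theorem card_filter_start_eq (B : Basis ((t : ι) × Fin (c t).len) ℂ (V n))
    (hB : ∀ t j, B ⟨t, j⟩ = (c t).v j) {k : ℕ} (hk : 2 * k ≤ n) :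
    (#{t | (c t).start = k} : ℤ) =
      (n.choose k : ℤ) - if k = 0 then 0 else (n.choose (k - 1) : ℤ) := by
  rcases k with _ | k
  · simpa using card_filter_start_le c B hB hk
  · have hsplit :
        #{t | (c t).start ≤ k + 1} = #{t | (c t).start = k + 1} + #{t | (c t).start ≤ k} := by
      classical
      rw [← card_union_of_disjoint (disjoint_filter.2 fun _ _ _ => by omega)]
      congr 1
      ext
      simp only [mem_filter, mem_union, mem_univ, true_and]
      omega
    rw [card_filter_start_le c B hB hk, card_filter_start_le c B hB (by omega)] at hsplit
    simp only [Nat.add_sub_cancel, add_eq_zero, one_ne_zero, and_false, if_false]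
    omega

end SJC

/-- `V(B(n))` has a symmetric Jordan basis in which, for each `0 ≤ k ≤ n/2`,
the number of chains starting at rank `k` (and ending at rank `n-k`) is `C(n,k) - C(n,k-1)`. -/
theorem symmetric_jordan_basis_exists (n : ℕ) :
    ∃ (m : ℕ) (c : Fin m → SJC n)
      (B : Module.Basis ((t : Fin m) × Fin (c t).len) ℂ (Finset (Fin n) → ℂ)),
      (∀ t j, B ⟨t, j⟩ = (c t).v j) ∧
      ∀ k : ℕ, 2 * k ≤ n →
        (((Finset.univ.filter fun t => (c t).start = k).card : ℤ) =
          (n.choose k : ℤ) - if k = 0 then 0 else (n.choose (k - 1) : ℤ)) := by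
  obtain ⟨ι, _, c, hspan, hlen⟩ := SJC.exists_spanning_family n
  have hcard : Fintype.card ((t : ι) × Fin (c t).len) = finrank ℂ (V n) := by
    simp [hlen]
  let e := (Fintype.equivFin ι).symm
  let B := (basisOfTopLeSpanOfCardEqFinrank _ hspan hcard).reindex (Equiv.sigmaCongrLeft e).symm
  have hB (t : Fin (Fintype.card ι)) (j : Fin (c (e t)).len) : B ⟨t, j⟩ = (c (e t)).v j := by
    rw [Basis.reindex_apply, Equiv.symm_symm, coe_basisOfTopLeSpanOfCardEqFinrank]
    rfl
  exact ⟨_, fun t => c (e t), B, hB, fun k hk => SJC.card_filter_start_eq _ B hB hk⟩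
end
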